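/- arXiv:2112.05204 — 12 statements merged into one kernel-verified Lean document; each statement's English description precedes it below -/
import Mathlib

section
/- (Representation Formula) Let X be a left module over the quaternions ℍ and let f : ℍ → X. Suppose there are functions f₀, f₁ : ℝ × ℝ → X with f₀(u,−v) = f₀(u,v) and f₁(u,−v) = −f₁(u,v) for all u, v ∈ ℝ, such that for every u, v ∈ ℝ and every I ∈ ℍ with I² = −1 one has f(u + vI) = f₀(u,v) + I·f₁(u,v). Then for all u, v ∈ ℝ and all I, J ∈ ℍ with I² = J² = −1: f(u + vI) = (1/2)·(f(u + vJ) + f(u − vJ)) + (1/2)·(I·J)·(f(u − vJ) − f(u + vJ)). -/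
/-- Representation Formula for quaternionic left slice functions. -/
theorem stmt_1 {X : Type*} [AddCommGroup X] [Module (Quaternion ℝ) X]
    (f : Quaternion ℝ → X) (f₀ f₁ : ℝ × ℝ → X)
    (h₀ : ∀ u v : ℝ, f₀ (u, -v) = f₀ (u, v))
    (h₁ : ∀ u v : ℝ, f₁ (u, -v) = -f₁ (u, v))
    (hslice : ∀ (u v : ℝ) (I : Quaternion ℝ), I * I = -1 →
      f ((u : Quaternion ℝ) + v • I) = f₀ (u, v) + I • f₁ (u, v)) :
    ∀ (u v : ℝ) (I J : Quaternion ℝ), I * I = -1 → J * J = -1 →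
      f ((u : Quaternion ℝ) + v • I) =
        ((2 : Quaternion ℝ)⁻¹) • (f ((u : Quaternion ℝ) + v • J) + f ((u : Quaternion ℝ) - v • J))
          + ((2 : Quaternion ℝ)⁻¹) • ((I * J) •
              (f ((u : Quaternion ℝ) - v • J) - f ((u : Quaternion ℝ) + v • J))) := by
  intro u v I J hI hJ
  have hm : f ((u : Quaternion ℝ) - v • J) = f₀ (u, v) - J • f₁ (u, v) := by
    have := hslice u (-v) J hJ
    rw [h₀, h₁] at this
    simpa [neg_smul, sub_eq_add_neg, smul_neg] using this
  rw [hslice u v I hI, hslice u v J hJ, hm]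
  have h2 : (f₀ (u, v) + J • f₁ (u, v)) + (f₀ (u, v) - J • f₁ (u, v))
      = (2 : Quaternion ℝ) • f₀ (u, v) := by
    rw [two_smul]; abel
  have h3 : (f₀ (u, v) - J • f₁ (u, v)) - (f₀ (u, v) + J • f₁ (u, v))
      = ((-2 : Quaternion ℝ) * J) • f₁ (u, v) := by
    rw [mul_smul, neg_smul, two_smul]; abel
  rw [h2, h3, smul_smul, smul_smul, smul_smul]
  have c2 : ∀ x : Quaternion ℝ, x * 2 = 2 * x := fun x => (Commute.ofNat_right x 2).eq
  have e1 : (2 : Quaternion ℝ)⁻¹ * 2 = 1 := inv_mul_cancel₀ (by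
    have : ((2:ℝ) : Quaternion ℝ) ≠ 0 := Quaternion.coe_injective.ne (by norm_num)
    intro h; apply this; rw [← h]; ext <;> rfl)
  have e2 : (2 : Quaternion ℝ)⁻¹ * (I * J) * (-2 * J) = I := by
    rw [mul_assoc, neg_mul, mul_neg, ← mul_assoc, c2 (I * J), mul_assoc,
      mul_assoc, hJ, mul_neg_one]
    simp [mul_neg, neg_neg, ← mul_assoc, e1]
  rw [e1, e2, one_smul]
end

section
/- Let x, s ∈ ℍ with x ∉ [s], i.e. it is not the case that Re(x) = Re(s) and ‖x‖ = ‖s‖. Then x² − 2Re(s)x + ‖s‖² ≠ 0, s² − 2Re(x)s + ‖x‖² ≠ 0, and the two forms of the left slice hyperholomorphic Cauchy kernel agree: −(x² − 2Re(s)x + ‖s‖²)⁻¹·(x − s̄) = (s − x̄)·(s² − 2Re(x)s + ‖x‖²)⁻¹. -/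
open Quaternion

private lemma norm_sq_eq (x : Quaternion ℝ) :
    ‖x‖ ^ 2 = x.re ^ 2 + x.imI ^ 2 + x.imJ ^ 2 + x.imK ^ 2 := by
  rw [← Quaternion.normSq_def', sq, ← normSq_eq_norm_mul_self]

private lemma keyP (x s : Quaternion ℝ) :
    x ^ 2 - 2 * (s.re : Quaternion ℝ) * x + ((‖s‖ ^ 2 : ℝ) : Quaternion ℝ)
      = ⟨2 * (x.re - s.re) * x.re + (‖s‖ ^ 2 - ‖x‖ ^ 2),
         2 * (x.re - s.re) * x.imI,
         2 * (x.re - s.re) * x.imJ,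
         2 * (x.re - s.re) * x.imK⟩ := by
  rw [norm_sq_eq x, norm_sq_eq s, show (2 : Quaternion ℝ) = ((2:ℝ) : Quaternion ℝ) from by norm_cast]
  ext <;>
    simp only [pow_two, Quaternion.re_mul, Quaternion.imI_mul, Quaternion.imJ_mul,
      Quaternion.imK_mul, Quaternion.re_add, Quaternion.imI_add, Quaternion.imJ_add,
      Quaternion.imK_add, Quaternion.re_sub, Quaternion.imI_sub, Quaternion.imJ_sub,
      Quaternion.imK_sub, Quaternion.re_coe, Quaternion.imI_coe, Quaternion.imJ_coe,
      Quaternion.imK_coe] <;>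
    ring

private lemma Pne (x s : Quaternion ℝ)
    (h : ¬(x.re = s.re ∧ ‖x‖ = ‖s‖)) :
    x ^ 2 - 2 * (s.re : Quaternion ℝ) * x + ((‖s‖ ^ 2 : ℝ) : Quaternion ℝ) ≠ 0 := by
  intro hP
  apply h
  rw [keyP] at hP
  replace hP := Quaternion.ext_iff.mp hP
  obtain ⟨hre, hI, hJ, hK⟩ := hP
  simp only [Quaternion.re_zero, Quaternion.imI_zero, Quaternion.imJ_zero,
    Quaternion.imK_zero] at hre hI hJ hK
  have hx2 := norm_sq_eq x
  have hs2 := norm_sq_eq s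
  by_cases hre' : x.re = s.re
  · refine ⟨hre', ?_⟩
    rw [hre'] at hre
    have hsq : ‖x‖ ^ 2 = ‖s‖ ^ 2 := by linarith [hre]
    calc ‖x‖ = Real.sqrt (‖x‖ ^ 2) := (Real.sqrt_sq (norm_nonneg x)).symm
      _ = Real.sqrt (‖s‖ ^ 2) := by rw [hsq]
      _ = ‖s‖ := Real.sqrt_sq (norm_nonneg s)
  · exfalso
    have c : (2 : ℝ) * (x.re - s.re) ≠ 0 := by
      simp [sub_eq_zero, hre']
    have hI0 : x.imI = 0 := by rcases mul_eq_zero.mp hI with h' | h' <;> tauto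
    have hJ0 : x.imJ = 0 := by rcases mul_eq_zero.mp hJ with h' | h' <;> tauto
    have hK0 : x.imK = 0 := by rcases mul_eq_zero.mp hK with h' | h' <;> tauto
    have hle : (x.re - s.re) ^ 2 ≤ 0 := by
      nlinarith [sq_nonneg s.imI, sq_nonneg s.imJ, sq_nonneg s.imK]
    have : x.re - s.re = 0 := by nlinarith [sq_nonneg (x.re - s.re)]
    exact hre' (sub_eq_zero.mp this)

set_option maxHeartbeats 1600000 in
private lemma hmain (x s : Quaternion ℝ) :
    -(x - star s) * (s ^ 2 - 2 * (x.re : Quaternion ℝ) * s + ((‖x‖ ^ 2 : ℝ) : Quaternion ℝ))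
      = (x ^ 2 - 2 * (s.re : Quaternion ℝ) * x + ((‖s‖ ^ 2 : ℝ) : Quaternion ℝ))
        * (s - star x) := by
  rw [norm_sq_eq x, norm_sq_eq s, show (2 : Quaternion ℝ) = ((2:ℝ) : Quaternion ℝ) from by norm_cast]
  ext <;>
    simp only [pow_two, Quaternion.re_mul, Quaternion.imI_mul, Quaternion.imJ_mul,
      Quaternion.imK_mul, Quaternion.re_add, Quaternion.imI_add, Quaternion.imJ_add,
      Quaternion.imK_add, Quaternion.re_sub, Quaternion.imI_sub, Quaternion.imJ_sub,
      Quaternion.imK_sub, Quaternion.re_neg, Quaternion.imI_neg, Quaternion.imJ_neg,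
      Quaternion.imK_neg, Quaternion.re_star, Quaternion.imI_star, Quaternion.imJ_star,
      Quaternion.imK_star, Quaternion.re_coe, Quaternion.imI_coe, Quaternion.imJ_coe,
      Quaternion.imK_coe] <;>
    ring

/-- the two forms of the left slice hyperholomorphic Cauchy kernel agree
for quaternions `x ∉ [s]`. -/
theorem stmt_2 (x s : Quaternion ℝ)
    (h : ¬(x.re = s.re ∧ ‖x‖ = ‖s‖)) :
    x ^ 2 - 2 * (s.re : Quaternion ℝ) * x + ((‖s‖ ^ 2 : ℝ) : Quaternion ℝ) ≠ 0 ∧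
    s ^ 2 - 2 * (x.re : Quaternion ℝ) * s + ((‖x‖ ^ 2 : ℝ) : Quaternion ℝ) ≠ 0 ∧
    -(x ^ 2 - 2 * (s.re : Quaternion ℝ) * x + ((‖s‖ ^ 2 : ℝ) : Quaternion ℝ))⁻¹ * (x - star s)
      = (s - star x) * (s ^ 2 - 2 * (x.re : Quaternion ℝ) * s + ((‖x‖ ^ 2 : ℝ) : Quaternion ℝ))⁻¹ := by
  have h' : ¬(s.re = x.re ∧ ‖s‖ = ‖x‖) := by
    rintro ⟨h1, h2⟩; exact h ⟨h1.symm, h2.symm⟩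
  have hP := Pne x s h
  have hQ := Pne s x h'
  set P := x ^ 2 - 2 * (s.re : Quaternion ℝ) * x + ((‖s‖ ^ 2 : ℝ) : Quaternion ℝ) with hPdef
  set Q := s ^ 2 - 2 * (x.re : Quaternion ℝ) * s + ((‖x‖ ^ 2 : ℝ) : Quaternion ℝ) with hQdef
  refine ⟨hP, hQ, ?_⟩
  have hm := hmain x s
  have e1 : (s - star x) * Q⁻¹ = (P⁻¹ * (P * (s - star x))) * Q⁻¹ := by
    rw [← mul_assoc, inv_mul_cancel₀ hP, one_mul]
  rw [e1, ← hm, mul_assoc, mul_assoc, mul_inv_cancel₀ hQ, mul_one, neg_mul, mul_neg]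
end

section
/- Let x, s ∈ ℍ with ‖x‖ < ‖s‖. Then x² − 2Re(s)x + ‖s‖² ≠ 0, the left S-resolvent series n ↦ xⁿ·(s⁻¹)^{n+1} is absolutely summable, and its sum is ∑_{n=0}^∞ xⁿ·(s⁻¹)^{n+1} = −(x² − 2Re(s)x + ‖s‖²)⁻¹·(x − s̄). -/
lemma stmt4_aux {R : Type*} [Ring R] (T s x a b : R)
    (ha : a * T = T * a) (hb : b * T = T * b)
    (key : x * T = -1 + T * s) (hCH : s ^ 2 - a * s + b = 0) :
    (x ^ 2 - a * x + b) * T = a - s - x := by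
  have e2 : x ^ 2 * T = T * s ^ 2 - s - x := by
    calc x ^ 2 * T = x * (x * T) := by rw [sq, mul_assoc]
      _ = x * (-1 + T * s) := by rw [key]
      _ = -x + (x * T) * s := by noncomm_ring
      _ = -x + (-1 + T * s) * s := by rw [key]
      _ = T * s ^ 2 - s - x := by noncomm_ring
  calc (x ^ 2 - a * x + b) * T
      = x ^ 2 * T - a * (x * T) + b * T := by noncomm_ring
    _ = (T * s ^ 2 - s - x) - a * (-1 + T * s) + b * T := by rw [e2, key]
    _ = T * s ^ 2 - (a * T) * s + (b * T) + a - s - x := by noncomm_ring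
    _ = T * s ^ 2 - (T * a) * s + (T * b) + a - s - x := by rw [ha, hb]
    _ = T * (s ^ 2 - a * s + b) + a - s - x := by noncomm_ring
    _ = a - s - x := by rw [hCH, mul_zero, zero_add]

/-- for quaternions with `‖x‖ < ‖s‖`, the left S-resolvent series
`∑ xⁿ (s⁻¹)^(n+1)` is absolutely summable and sums to the left Cauchy kernel. -/
theorem stmt_4 (x s : Quaternion ℝ) (h : ‖x‖ < ‖s‖) :
    x ^ 2 - 2 * (s.re : Quaternion ℝ) * x + ((‖s‖ ^ 2 : ℝ) : Quaternion ℝ) ≠ 0 ∧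
    Summable (fun n : ℕ => ‖x ^ n * (s⁻¹) ^ (n + 1)‖) ∧
    ∑' n : ℕ, x ^ n * (s⁻¹) ^ (n + 1)
      = -(x ^ 2 - 2 * (s.re : Quaternion ℝ) * x + ((‖s‖ ^ 2 : ℝ) : Quaternion ℝ))⁻¹
          * (x - star s) := by
  have hs0 : (0:ℝ) < ‖s‖ := lt_of_le_of_lt (norm_nonneg x) h
  have hs : s ≠ 0 := norm_pos_iff.mp hs0
  set P : Quaternion ℝ :=
    x ^ 2 - 2 * (s.re : Quaternion ℝ) * x + ((‖s‖ ^ 2 : ℝ) : Quaternion ℝ) with hP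
  set fq : ℕ → Quaternion ℝ := fun n => x ^ n * (s⁻¹) ^ (n + 1) with hfq
  have hnorm : ∀ n, ‖fq n‖ = (‖x‖ * ‖s‖⁻¹) ^ n * ‖s‖⁻¹ := by
    intro n
    simp only [hfq, norm_mul, norm_pow, norm_inv, mul_pow, pow_succ]
    ring
  have hr : ‖x‖ * ‖s‖⁻¹ < 1 := by
    rw [← div_eq_mul_inv]
    exact (div_lt_one hs0).mpr h
  have hsum : Summable fun n => ‖fq n‖ := by
    have := (summable_geometric_of_lt_one (by positivity) hr).mul_right ‖s‖⁻¹
    simpa [hnorm] using this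
  have hS : Summable fq := hsum.of_norm
  set g : ℕ → Quaternion ℝ := fun n => x ^ n * (s⁻¹) ^ n with hgdef
  have hg : Summable g := by
    have := hS.mul_right s
    have e : (fun n => fq n * s) = g := by
      funext n
      simp [hfq, hgdef, pow_succ, mul_assoc, inv_mul_cancel₀ hs]
    rwa [e] at this
  set T : Quaternion ℝ := ∑' n, fq n with hT
  have hxT : x * T = ∑' n, g (n + 1) := by
    rw [hT, ← tsum_mul_left]
    congr 1; funext n
    simp only [hfq, hgdef]
    rw [← mul_assoc, ← pow_succ']
  have hTs : T * s = ∑' n, g n := by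
    rw [hT, ← tsum_mul_right]
    congr 1; funext n
    simp [hfq, hgdef, pow_succ, mul_assoc, inv_mul_cancel₀ hs]
  have key : x * T = -1 + T * s := by
    rw [hxT, hTs, Summable.tsum_eq_zero_add hg]
    simp [hgdef]
  have ha : (2 * (s.re : Quaternion ℝ)) * T = T * (2 * (s.re : Quaternion ℝ)) := by
    rw [mul_assoc, Quaternion.coe_commutes, ← mul_assoc, two_mul, ← mul_two, mul_assoc]
  have hb : ((‖s‖ ^ 2 : ℝ) : Quaternion ℝ) * T = T * ((‖s‖ ^ 2 : ℝ) : Quaternion ℝ) :=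
    Quaternion.coe_commutes _ _
  have hCH : s ^ 2 - 2 * (s.re : Quaternion ℝ) * s + ((‖s‖ ^ 2 : ℝ) : Quaternion ℝ) = 0 := by
    have h1 : ((‖s‖ ^ 2 : ℝ) : Quaternion ℝ) = star s * s := by
      rw [sq, ← Quaternion.normSq_eq_norm_mul_self, ← Quaternion.star_mul_self]
    have h2 : 2 * (s.re : Quaternion ℝ) = s + star s := (Quaternion.self_add_star s).symm
    rw [h1, h2]
    noncomm_ring
  have hstar : star s = 2 * (s.re : Quaternion ℝ) - s :=
    eq_sub_of_add_eq (Quaternion.star_add_self s)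
  have hPT : P * T = star s - x := by
    rw [hP, stmt4_aux T s x _ _ ha hb key hCH, hstar]
  have hPne : P ≠ 0 := by
    intro h0
    rw [h0, zero_mul] at hPT
    have hx : x = star s := (sub_eq_zero.mp hPT.symm).symm
    rw [hx, norm_star] at h
    exact lt_irrefl _ h
  refine ⟨hPne, hsum, ?_⟩
  have hTval : T = P⁻¹ * (star s - x) := by
    rw [← hPT, ← mul_assoc, inv_mul_cancel₀ hPne, one_mul]
  rw [hTval]
  noncomm_ring
end

section
/- Let x, s ∈ ℍ with ‖x‖ < ‖s‖. Then x² − 2Re(s)x + ‖s‖² ≠ 0, the right S-resolvent series n ↦ (s⁻¹)^{n+1}·xⁿ is absolutely summable, and its sum is ∑_{n=0}^∞ (s⁻¹)^{n+1}·xⁿ = −(x − s̄)·(x² − 2Re(s)x + ‖s‖²)⁻¹. -/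
/-- for quaternions with `‖x‖ < ‖s‖`, the right S-resolvent series
`∑ (s⁻¹)^(n+1) xⁿ` is absolutely summable and sums to the right Cauchy kernel. -/
theorem stmt_5 (x s : Quaternion ℝ) (h : ‖x‖ < ‖s‖) :
    x ^ 2 - 2 * (s.re : Quaternion ℝ) * x + ((‖s‖ ^ 2 : ℝ) : Quaternion ℝ) ≠ 0 ∧
    Summable (fun n : ℕ => ‖(s⁻¹) ^ (n + 1) * x ^ n‖) ∧
    ∑' n : ℕ, (s⁻¹) ^ (n + 1) * x ^ n
      = -(x - star s)
          * (x ^ 2 - 2 * (s.re : Quaternion ℝ) * x + ((‖s‖ ^ 2 : ℝ) : Quaternion ℝ))⁻¹ := by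
  have hs0 : s ≠ 0 := by
    intro hs; rw [hs, norm_zero] at h; exact absurd (norm_nonneg x) (not_le.2 h)
  have hsn : (0:ℝ) < ‖s‖ := lt_of_le_of_lt (norm_nonneg x) h
  set P : Quaternion ℝ :=
    x ^ 2 - 2 * (s.re : Quaternion ℝ) * x + ((‖s‖ ^ 2 : ℝ) : Quaternion ℝ) with hP
  set f : ℕ → Quaternion ℝ := fun n => (s⁻¹) ^ (n + 1) * x ^ n with hf
  -- summability of norms
  have hr : ‖x‖ * ‖s‖⁻¹ < 1 := by
    rw [← div_eq_mul_inv, div_lt_one hsn]; exact h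
  have hr0 : (0:ℝ) ≤ ‖x‖ * ‖s‖⁻¹ := by positivity
  have hnorm : ∀ n, ‖f n‖ = ‖s‖⁻¹ * (‖x‖ * ‖s‖⁻¹) ^ n := by
    intro n
    simp [hf, norm_mul, norm_pow, norm_inv, pow_succ, mul_pow]
    ring
  have hsum : Summable (fun n : ℕ => ‖f n‖) := by
    simp_rw [hnorm]
    exact (summable_geometric_of_lt_one hr0 hr).mul_left _
  have hfsum : Summable f := hsum.of_norm
  -- telescoping identity
  set e : ℕ → Quaternion ℝ :=
    fun n => (s⁻¹) ^ n * x ^ (n + 1) - star s * ((s⁻¹) ^ n * x ^ n) with he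
  have key : ∀ n, f n * P = e (n + 1) - e n := by
    intro n
    have h1 : star s * s = ((‖s‖ ^ 2 : ℝ) : Quaternion ℝ) := by
      rw [Quaternion.star_mul_self, sq, Quaternion.normSq_eq_norm_mul_self]
    have h2 : s + star s = 2 * (s.re : Quaternion ℝ) := Quaternion.self_add_star s
    have h3 : s * s⁻¹ = 1 := mul_inv_cancel₀ hs0
    have hc2 : ∀ q : Quaternion ℝ,
        q * (2 * (s.re : Quaternion ℝ)) = 2 * (s.re : Quaternion ℝ) * q := fun q => by
      rw [two_mul, mul_add, ← Quaternion.coe_commutes, add_mul]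
    have hcn : ∀ q : Quaternion ℝ,
        q * ((‖s‖ ^ 2 : ℝ) : Quaternion ℝ) = ((‖s‖ ^ 2 : ℝ) : Quaternion ℝ) * q :=
      fun q => (Quaternion.coe_commutes _ _).symm
    set A : Quaternion ℝ := (s⁻¹) ^ (n + 1) with hA
    have e1 : (A * x ^ n) * x ^ 2 = A * x ^ (n + 2) := by rw [mul_assoc, ← pow_add]
    have e2 : (A * x ^ n) * (2 * (s.re : Quaternion ℝ) * x)
        = 2 * (s.re : Quaternion ℝ) * (A * x ^ (n + 1)) := by
      rw [← mul_assoc, hc2, pow_succ, mul_assoc, mul_assoc, mul_assoc A (x ^ n) x, mul_assoc 2]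
    have e3 : (A * x ^ n) * ((‖s‖ ^ 2 : ℝ) : Quaternion ℝ)
        = ((‖s‖ ^ 2 : ℝ) : Quaternion ℝ) * (A * x ^ n) := hcn _
    have expand : f n * P = A * x ^ (n + 2)
        - 2 * (s.re : Quaternion ℝ) * (A * x ^ (n + 1))
        + ((‖s‖ ^ 2 : ℝ) : Quaternion ℝ) * (A * x ^ n) := by
      show (A * x ^ n) * P = _
      rw [hP, mul_add, mul_sub, e1, e2, e3]
    rw [expand]
    have hAA : ((‖s‖ ^ 2 : ℝ) : Quaternion ℝ) * A = star s * (s⁻¹) ^ n := by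
      rw [← h1, hA, pow_succ', mul_assoc, ← mul_assoc s, h3, one_mul]
    have hBB : 2 * (s.re : Quaternion ℝ) * A = (s⁻¹) ^ n + star s * A := by
      rw [← h2, add_mul, hA, pow_succ', ← mul_assoc, h3, one_mul]
    rw [← mul_assoc (((‖s‖ ^ 2 : ℝ) : Quaternion ℝ)), hAA,
        ← mul_assoc (2 * (s.re : Quaternion ℝ)), hBB]
    simp only [he, hA, add_mul, sub_mul, mul_add, mul_sub, mul_assoc, pow_succ]
    abel
  -- e tends to 0
  have hten : Filter.Tendsto e Filter.atTop (nhds 0) := by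
    have base : Filter.Tendsto (fun n : ℕ => (s⁻¹) ^ n * x ^ n) Filter.atTop (nhds 0) := by
      rw [tendsto_zero_iff_norm_tendsto_zero]
      have : (fun n : ℕ => ‖(s⁻¹) ^ n * x ^ n‖) = fun n => (‖x‖ * ‖s‖⁻¹) ^ n := by
        funext n; simp [norm_mul, norm_pow, norm_inv, mul_pow]; ring
      rw [this]
      exact tendsto_pow_atTop_nhds_zero_of_lt_one hr0 hr
    have t1 : Filter.Tendsto (fun n : ℕ => (s⁻¹) ^ n * x ^ (n+1)) Filter.atTop (nhds 0) := by
      have h' := base.mul_const x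
      rw [zero_mul] at h'
      convert h' using 2 with n
      rw [pow_succ, mul_assoc]
    have t2 : Filter.Tendsto (fun n : ℕ => star s * ((s⁻¹) ^ n * x ^ n)) Filter.atTop (nhds 0) := by
      have h' := base.const_mul (star s)
      rwa [mul_zero] at h'
    have := t1.sub t2
    rw [sub_zero] at this
    exact this
  -- sum of telescoping
  have hPsum : (∑' n, f n) * P = -(x - star s) := by
    have hsum2 : Summable (fun n => f n * P) := hfsum.mul_right P
    have hhas : HasSum (fun n => f n * P) ((∑' n, f n) * P) := hfsum.hasSum.mul_right P
    have hpartial : Filter.Tendsto (fun N => ∑ n ∈ Finset.range N, (f n * P))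
        Filter.atTop (nhds ((∑' n, f n) * P)) := hhas.tendsto_sum_nat
    have hpartial' : Filter.Tendsto (fun N => ∑ n ∈ Finset.range N, (f n * P))
        Filter.atTop (nhds (-(x - star s))) := by
      have : (fun N => ∑ n ∈ Finset.range N, (f n * P)) = fun N => e N - e 0 := by
        funext N
        rw [show (fun n => f n * P) = (fun n => e (n+1) - e n) from funext key]
        exact Finset.sum_range_sub e N
      rw [this]
      have : Filter.Tendsto (fun N => e N - e 0) Filter.atTop (nhds (0 - e 0)) :=
        hten.sub tendsto_const_nhds
      convert this using 2
      simp [he]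
    exact tendsto_nhds_unique hpartial hpartial'
  have hPne : P ≠ 0 := by
    intro hP0
    have h0 := hPsum
    rw [hP0, mul_zero] at h0
    have hx : x = star s := sub_eq_zero.mp (neg_eq_zero.mp h0.symm)
    rw [hx, Quaternion.norm_star] at h
    exact lt_irrefl _ h
  refine ⟨hPne, hsum, ?_⟩
  rw [eq_comm, ← hPsum, mul_assoc, mul_inv_cancel₀ hPne, mul_one]
end

section
/- Let x, s ∈ ℍ with ‖x‖ < ‖s‖. For n ≥ 0 set aₙ = ∑_{k=0}^{n} (s̄⁻¹)^{k+1}·(s⁻¹)^{n−k+1}. Then the series n ↦ xⁿ·aₙ is absolutely summable and (x² − 2Re(s)x + ‖s‖²)⁻¹ = ∑_{n=0}^∞ xⁿ·aₙ. -/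
open Finset Filter Quaternion


/-- power series expansion of the pseudo-resolvent
`(x² − 2Re(s)x + ‖s‖²)⁻¹ = ∑ xⁿ aₙ` with `aₙ = ∑_{k=0}^{n} (s̄⁻¹)^{k+1} (s⁻¹)^{n−k+1}`. -/
theorem stmt_6 (x s : Quaternion ℝ) (h : ‖x‖ < ‖s‖)
    (a : ℕ → Quaternion ℝ)
    (ha : ∀ n, a n = ∑ k ∈ Finset.range (n + 1), ((star s)⁻¹) ^ (k + 1) * (s⁻¹) ^ (n - k + 1)) :
    Summable (fun n : ℕ => ‖x ^ n * a n‖) ∧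
    (x ^ 2 - 2 * (s.re : Quaternion ℝ) * x + ((‖s‖ ^ 2 : ℝ) : Quaternion ℝ))⁻¹
      = ∑' n : ℕ, x ^ n * a n := by
  have hs0 : (0:ℝ) < ‖s‖ := lt_of_le_of_lt (norm_nonneg x) h
  have hsne : s ≠ 0 := norm_pos_iff.mp hs0
  set t : Quaternion ℝ := (star s)⁻¹ with ht
  set u : Quaternion ℝ := s⁻¹ with hu
  have hcss : Commute s (star s) := (star_comm_self' s).symm
  have hcomm : Commute t u := hcss.symm.inv_left₀.inv_right₀
  have hns : Quaternion.normSq s ≠ 0 := Quaternion.normSq_ne_zero.2 hsne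
  have hcns : (‖s‖ ^ 2 : ℝ) = Quaternion.normSq s := by
    rw [Quaternion.normSq_eq_norm_mul_self, sq]
  set c : Quaternion ℝ := ((‖s‖ ^ 2 : ℝ) : Quaternion ℝ) with hc
  set b : Quaternion ℝ := ((2 * s.re : ℝ) : Quaternion ℝ) with hb
  have hsinv : u = star s * ((Quaternion.normSq s : ℝ) : Quaternion ℝ)⁻¹ := by
    rw [hu]
    refine inv_eq_of_mul_eq_one_right ?_
    rw [← mul_assoc, Quaternion.self_mul_star, ← Quaternion.coe_inv, ← Quaternion.coe_mul,
      mul_inv_cancel₀ hns, Quaternion.coe_one]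
  have htinv : t = s * ((Quaternion.normSq s : ℝ) : Quaternion ℝ)⁻¹ := by
    rw [ht]
    refine inv_eq_of_mul_eq_one_right ?_
    rw [← mul_assoc, Quaternion.star_mul_self, ← Quaternion.coe_inv, ← Quaternion.coe_mul,
      mul_inv_cancel₀ hns, Quaternion.coe_one]
  have ctu : c * (t * u) = 1 := by
    rw [htinv, hsinv, hc, hcns, ← Quaternion.coe_inv]
    simp only [Quaternion.coe_mul_eq_smul, Quaternion.mul_coe_eq_smul, smul_mul_assoc,
      mul_smul_comm, smul_smul]
    rw [Quaternion.self_mul_star, Quaternion.smul_coe, ← Quaternion.coe_one]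
    congr 1
    field_simp
  have ctu2 : c * (t + u) = b := by
    rw [htinv, hsinv, hc, hb, hcns, ← Quaternion.coe_inv, ← add_mul, ← mul_assoc,
      Quaternion.coe_commutes, mul_assoc, ← Quaternion.coe_mul,
      mul_inv_cancel₀ hns, Quaternion.coe_one, mul_one, Quaternion.self_add_star']
  have ha0 : a 0 = t * u := by rw [ha 0]; simp
  have hA1 : ∀ n, a (n + 1) = t * a n + t * u ^ (n + 2) := by
    intro n
    rw [ha (n+1), Finset.sum_range_succ', ha n, Finset.mul_sum]
    congr 1
    · apply Finset.sum_congr rfl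
      intro k hk
      rw [Finset.mem_range] at hk
      have : n + 1 - (k + 1) + 1 = n - k + 1 := by omega
      rw [this, pow_succ', mul_assoc]
    · simp [pow_succ']
  have key : ∀ n, a (n + 2) = (t + u) * a (n + 1) - (t * u) * a n := by
    intro n
    have e2' : t * u ^ (n + 2) = a (n + 1) - t * a n := by rw [hA1 n]; noncomm_ring
    calc a (n + 2) = t * a (n + 1) + t * u ^ (n + 3) := hA1 (n+1)
      _ = t * a (n + 1) + u * (t * u ^ (n + 2)) := by
          rw [pow_succ' u (n+2), ← mul_assoc, ← mul_assoc, hcomm.eq]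
      _ = t * a (n + 1) + u * (a (n + 1) - t * a n) := by rw [e2']
      _ = (t + u) * a (n + 1) - (t * u) * a n := by
          rw [hcomm.eq]; noncomm_ring
  have hrec : ∀ n, c * a (n + 2) = b * a (n + 1) - a n := by
    intro n
    rw [key n, mul_sub, ← mul_assoc, ← mul_assoc, ctu2, ctu, one_mul]
  have hca0 : c * a 0 = 1 := by rw [ha0, ctu]
  have hba0 : b * a 0 = c * a 1 := by
    have ha1 : a 1 = t * (t * u) + t * (u * u) := by
      rw [hA1 0, ha0, show (0:ℕ)+2 = 2 from rfl, sq]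
    have h4 : u * (t * u) = t * (u * u) := by
      rw [← mul_assoc, ← hcomm.eq, mul_assoc]
    rw [ha0, ha1, ← ctu2, mul_assoc, add_mul, h4, mul_add]
  -- norm bounds
  have hnt : ‖t‖ = ‖s‖⁻¹ := by rw [ht, norm_inv, Quaternion.norm_star]
  have hnu : ‖u‖ = ‖s‖⁻¹ := by rw [hu, norm_inv]
  have bound : ∀ n, ‖x ^ n * a n‖ ≤ ((n : ℝ) + 1) * (‖x‖ / ‖s‖) ^ n * (‖s‖⁻¹) ^ 2 := by
    intro n
    have h1 : ‖a n‖ ≤ ((n : ℝ) + 1) * (‖s‖⁻¹) ^ (n + 2) := by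
      rw [ha n]
      refine le_trans (norm_sum_le _ _) ?_
      have he : ∀ k ∈ Finset.range (n + 1),
          ‖t ^ (k + 1) * u ^ (n - k + 1)‖ = (‖s‖⁻¹) ^ (n + 2) := by
        intro k hk
        rw [Finset.mem_range] at hk
        rw [norm_mul, norm_pow, norm_pow, hnt, hnu, ← pow_add]
        congr 1
        omega
      rw [Finset.sum_congr rfl he, Finset.sum_const, Finset.card_range, nsmul_eq_mul]
      push_cast
      exact le_rfl
    calc ‖x ^ n * a n‖ ≤ ‖x ^ n‖ * ‖a n‖ := norm_mul_le _ _
      _ ≤ ‖x‖ ^ n * (((n : ℝ) + 1) * (‖s‖⁻¹) ^ (n + 2)) := by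
          rw [norm_pow]
          exact mul_le_mul_of_nonneg_left h1 (by positivity)
      _ = ((n : ℝ) + 1) * (‖x‖ / ‖s‖) ^ n * (‖s‖⁻¹) ^ 2 := by
          rw [div_pow, pow_add]
          field_simp
          ring_nf
          rw [mul_assoc, ← mul_pow, mul_inv_cancel₀ hs0.ne', one_pow, mul_one]
  have hr1 : ‖(‖x‖ / ‖s‖ : ℝ)‖ < 1 := by
    rw [Real.norm_eq_abs, abs_of_nonneg (by positivity)]
    exact (div_lt_one hs0).mpr h
  have hgeo : Summable (fun n : ℕ => ((n : ℝ) + 1) * (‖x‖ / ‖s‖) ^ n * (‖s‖⁻¹) ^ 2) := by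
    apply Summable.mul_right
    have h1 := summable_pow_mul_geometric_of_norm_lt_one 1 hr1
    have h2 := summable_geometric_of_norm_lt_one hr1
    simpa [add_mul, pow_one] using h1.add h2
  have hsum : Summable (fun n : ℕ => ‖x ^ n * a n‖) :=
    Summable.of_nonneg_of_le (fun n => norm_nonneg _) bound hgeo
  refine ⟨hsum, ?_⟩
  have hf : Summable (fun n : ℕ => x ^ n * a n) := hsum.of_norm
  set S : Quaternion ℝ := ∑' n : ℕ, x ^ n * a n with hS
  set p : Quaternion ℝ := x ^ 2 - 2 * (s.re : Quaternion ℝ) * x + c with hp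
  have hbp : (2 : Quaternion ℝ) * (s.re : Quaternion ℝ) = b := by
    rw [hb, Quaternion.coe_mul, show ((2:ℝ):Quaternion ℝ) = 2 from by norm_cast]
  have hbx : ∀ m : ℕ, b * x ^ m = x ^ m * b := fun m => (Quaternion.coe_commute _ _).pow_right m
  have hcx : ∀ m : ℕ, c * x ^ m = x ^ m * c := fun m => (Quaternion.coe_commute _ _).pow_right m
  have hpf : ∀ n, p * (x ^ n * a n)
      = x ^ (n + 2) * a n - x ^ (n + 1) * (b * a n) + x ^ n * (c * a n) := by
    intro n
    rw [hp, hbp, add_mul, sub_mul]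
    congr 1
    · congr 1
      · rw [← mul_assoc, ← pow_add, Nat.add_comm 2 n]
      · rw [mul_assoc b x, ← mul_assoc x, ← pow_succ', ← mul_assoc, hbx (n+1), mul_assoc]
    · rw [← mul_assoc, hcx n, mul_assoc]
  have key2 : ∀ N, p * (∑ n ∈ Finset.range (N + 1), x ^ n * a n)
      = 1 + x ^ (N + 2) * a N - x ^ (N + 1) * (c * a (N + 1)) := by
    intro N
    induction N with
    | zero =>
      rw [Finset.sum_range_one, hpf 0, hca0, hba0]
      simp only [pow_zero, one_mul]
      abel
    | succ N ih =>
      rw [Finset.sum_range_succ, mul_add, ih, hpf (N+1),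
        show N+1+2 = N+3 from rfl, show N+1+1 = N+2 from rfl, hrec N, mul_sub]
      abel
  have hfz : Tendsto (fun n : ℕ => x ^ n * a n) atTop (nhds 0) := hf.tendsto_atTop_zero
  have htend : Tendsto (fun N => p * (∑ n ∈ Finset.range (N + 1), x ^ n * a n))
      atTop (nhds (p * S)) :=
    ((hf.hasSum.tendsto_sum_nat).comp (tendsto_add_atTop_nat 1)).const_mul p
  have htend2 : Tendsto (fun N => p * (∑ n ∈ Finset.range (N + 1), x ^ n * a n))
      atTop (nhds 1) := by
    have heq : ∀ N, p * (∑ n ∈ Finset.range (N + 1), x ^ n * a n)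
        = 1 + x ^ 2 * (x ^ N * a N) - c * (x ^ (N + 1) * a (N + 1)) := by
      intro N
      have e1 : x ^ 2 * (x ^ N * a N) = x ^ (N + 2) * a N := by
        rw [← mul_assoc, ← pow_add, Nat.add_comm 2 N]
      have e2 : c * (x ^ (N + 1) * a (N + 1)) = x ^ (N + 1) * (c * a (N + 1)) := by
        rw [← mul_assoc, hcx, mul_assoc]
      rw [key2 N, e1, e2]
    simp only [heq]
    have hlim : Tendsto (fun N : ℕ => 1 + x ^ 2 * (x ^ N * a N)
        - c * (x ^ (N + 1) * a (N + 1))) atTop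
        (nhds (1 + x ^ 2 * 0 - c * 0)) := by
      apply Tendsto.sub
      · exact Tendsto.add tendsto_const_nhds (hfz.const_mul _)
      · exact ((hfz.comp (tendsto_add_atTop_nat 1)).const_mul _)
    simpa using hlim
  have hpS : p * S = 1 := tendsto_nhds_unique htend htend2
  exact inv_eq_of_mul_eq_one_right hpS
end

section
/- Let Y be a complex Banach space, let A be a bounded ℝ-linear operator on Y, and let s ∈ ℂ with ‖A‖ < |s|. For n ≥ 0 set aₙ = ∑_{k=0}^{n} s̄^{−k−1}·s^{−n+k−1} (each aₙ is a real number since aₙ = conj(aₙ)). Then the series n ↦ aₙ·Aⁿ converges absolutely in the operator norm, the operator Q_s(A) = A² − 2Re(s)A + |s|²I is invertible in the Banach algebra of bounded ℝ-linear operators on Y, and Q_s(A)⁻¹ = ∑_{n=0}^∞ aₙ·Aⁿ. -/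
set_option maxHeartbeats 1000000 in
/-- power series expansion of the pseudo-resolvent `Q_s(A)⁻¹` for a bounded
ℝ-linear operator `A` on a complex Banach space `Y`, for `‖A‖ < |s|`. -/
theorem stmt_7 {Y : Type*} [NormedAddCommGroup Y] [NormedSpace ℂ Y] [CompleteSpace Y]
    (A : Y →L[ℝ] Y) (s : ℂ) (hs : ‖A‖ < ‖s‖)
    (a : ℕ → ℂ)
    (ha : ∀ n, a n = ∑ k ∈ Finset.range (n + 1),
      (starRingEnd ℂ s) ^ (-(k : ℤ) - 1) * s ^ ((k : ℤ) - (n : ℤ) - 1)) :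
    (∀ n, starRingEnd ℂ (a n) = a n) ∧
    Summable (fun n : ℕ => ‖a n • A ^ n‖) ∧
    IsUnit (A ^ 2 - (2 * s.re) • A + (‖s‖ ^ 2) • (1 : Y →L[ℝ] Y)) ∧
    Ring.inverse (A ^ 2 - (2 * s.re) • A + (‖s‖ ^ 2) • (1 : Y →L[ℝ] Y))
      = ∑' n : ℕ, a n • A ^ n := by
  have hsa : (0:ℝ) < ‖s‖ := lt_of_le_of_lt (norm_nonneg A) hs
  have hsa0 : ‖s‖ ≠ 0 := ne_of_gt hsa
  have hs0 : s ≠ 0 := by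
    intro h
    rw [h, norm_zero] at hsa
    exact lt_irrefl 0 hsa
  have hcs0 : (starRingEnd ℂ) s ≠ 0 := by simpa using hs0
  -- conjugation symmetry
  have hconj : ∀ n, starRingEnd ℂ (a n) = a n := by
    intro n
    rw [ha n, map_sum, ← Finset.sum_range_reflect]
    apply Finset.sum_congr rfl
    intro k hk
    have h1 : (↑(n + 1 - 1 - k) : ℤ) = (n : ℤ) - k := by
      have hk' : k ≤ n := Nat.lt_succ_iff.mp (Finset.mem_range.mp hk)
      omega
    simp only [map_mul, map_zpow₀, Complex.conj_conj, h1]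
    rw [mul_comm]
    congr 1 <;> · congr 1; omega
  -- the real sequence
  set r : ℕ → ℝ := fun n => (a n).re with hrdef
  have hra : ∀ n, a n = ((r n : ℝ) : ℂ) :=
    fun n => ((Complex.conj_eq_iff_re).mp (hconj n)).symm
  -- bound on |a n| and summability
  have habs : ∀ n, ‖a n‖ ≤ (n + 1) * (‖s‖ ^ (n + 2))⁻¹ := by
    intro n
    rw [ha n]
    calc ‖∑ k ∈ Finset.range (n + 1),
          (starRingEnd ℂ s) ^ (-(k : ℤ) - 1) * s ^ ((k : ℤ) - (n : ℤ) - 1)‖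
        ≤ ∑ k ∈ Finset.range (n + 1),
          ‖(starRingEnd ℂ s) ^ (-(k : ℤ) - 1) * s ^ ((k : ℤ) - (n : ℤ) - 1)‖ :=
          norm_sum_le _ _
      _ = ∑ k ∈ Finset.range (n + 1), (‖s‖ ^ (n + 2) : ℝ)⁻¹ := by
          apply Finset.sum_congr rfl
          intro k hk
          rw [norm_mul, norm_zpow, norm_zpow, Complex.norm_conj, ← zpow_add₀ hsa0]
          rw [show (-(k:ℤ) - 1) + ((k:ℤ) - n - 1) = -((n:ℤ)+2) by ring]
          rw [zpow_neg, ← zpow_natCast ‖s‖ (n+2)]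
          push_cast
          ring_nf
      _ = (n + 1) * (‖s‖ ^ (n + 2) : ℝ)⁻¹ := by
          rw [Finset.sum_const, Finset.card_range, nsmul_eq_mul]
          push_cast; ring
  set t : ℝ := ‖A‖ / ‖s‖ with htdef
  have ht0 : 0 ≤ t := div_nonneg (norm_nonneg A) (le_of_lt hsa)
  have ht1 : t < 1 := (div_lt_one hsa).mpr hs
  have hnsum : Summable (fun n : ℕ => ‖a n • A ^ n‖) := by
    have hgs : Summable (fun n : ℕ => (((n:ℝ) + 1) * t ^ n) * (‖s‖ ^ 2)⁻¹) := by
      apply Summable.mul_right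
      have h1 : Summable (fun n : ℕ => (n:ℝ) ^ 1 * t ^ n) :=
        summable_pow_mul_geometric_of_norm_lt_one 1
          (by rwa [Real.norm_eq_abs, abs_of_nonneg ht0])
      have h2 : Summable (fun n : ℕ => t ^ n) := summable_geometric_of_lt_one ht0 ht1
      have := h1.add h2
      apply this.congr
      intro n; push_cast; ring
    apply Summable.of_nonneg_of_le (fun n => norm_nonneg _) _ hgs
    intro n
    calc ‖a n • A ^ n‖ ≤ ‖a n‖ * ‖A ^ n‖ := ContinuousLinearMap.opNorm_smul_le _ _
      _ ≤ ((n + 1) * (‖s‖ ^ (n + 2))⁻¹) * ‖A‖ ^ n := by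
          have hpow : ‖A ^ n‖ ≤ ‖A‖ ^ n := by
            induction n with
            | zero =>
              rw [pow_zero, pow_zero, ContinuousLinearMap.one_def]
              exact ContinuousLinearMap.norm_id_le
            | succ m ih =>
              rw [pow_succ, pow_succ]
              exact le_trans (norm_mul_le _ _) (mul_le_mul_of_nonneg_right ih (norm_nonneg A))
          have h1 : ‖a n‖ = ‖a n‖ := rfl
          rw [h1]
          exact mul_le_mul (habs n) hpow (norm_nonneg _)
            (mul_nonneg (by positivity) (by positivity))
      _ = (((n:ℝ) + 1) * t ^ n) * (‖s‖ ^ 2)⁻¹ := by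
          rw [htdef, div_pow, pow_add, mul_inv]
          ring
  -- recurrence for `a`, complex version
  have haux : ∀ n : ℕ, (starRingEnd ℂ s) * a (n+1) = a n + s ^ (-(n:ℤ)-2) := by
    intro n
    rw [ha (n+1), ha n, Finset.mul_sum, Finset.sum_range_succ']
    congr 1
    · apply Finset.sum_congr rfl
      intro k hk
      push_cast
      rw [← mul_assoc]
      congr 1
      · rw [← zpow_one_add₀ hcs0]; congr 1; ring
      · congr 1; ring
    · push_cast
      rw [← mul_assoc, ← zpow_one_add₀ hcs0]
      norm_num
      congr 1
      ring
  have ha0 : a 0 = (starRingEnd ℂ s) ^ (-1:ℤ) * s ^ (-1:ℤ) := by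
    rw [ha 0, Finset.sum_range_one]
    norm_num
  have key : ∀ n : ℕ, s * (starRingEnd ℂ s) * a (n+1) = s * a n + s ^ (-(n:ℤ)-1) := by
    intro n
    have h1 : s * ((starRingEnd ℂ s) * a (n+1)) = s * (a n + s ^ (-(n:ℤ)-2)) := by
      rw [haux n]
    have h4 : s * s ^ (-(n:ℤ)-2) = s ^ (-(n:ℤ)-1) := by
      rw [← zpow_one_add₀ hs0]; congr 1; ring
    rw [mul_add, h4] at h1
    rw [← mul_assoc] at h1
    exact h1
  have c0 : (s * starRingEnd ℂ s) * a 0 = 1 := by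
    rw [ha0]; field_simp
  have c1 : (s * starRingEnd ℂ s) * a 1 = (s + starRingEnd ℂ s) * a 0 := by
    have h0 := key 0
    norm_num at h0
    have h2 : s ^ (-1:ℤ) = (starRingEnd ℂ s) * a 0 := by
      rw [ha0]; field_simp
    rw [zpow_neg_one] at h2
    rw [h0, h2]; ring
  have c2 : ∀ n : ℕ, (s * starRingEnd ℂ s) * a (n+2)
      = (s + starRingEnd ℂ s) * a (n+1) - a n := by
    intro n
    have h3 := key (n+1)
    push_cast at h3
    have h2 : s ^ (-((n:ℤ)+1)-1) = (starRingEnd ℂ s) * a (n+1) - a n := by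
      have h := haux n
      rw [show (-((n:ℤ)+1)-1) = -(n:ℤ)-2 by ring, h]; ring
    rw [show ((n:ℕ)+2) = (n+1)+1 from rfl, h3, h2]; ring
  -- recurrence for `r`, real version
  have hms : s * starRingEnd ℂ s = ((‖s‖ ^ 2 : ℝ) : ℂ) := by
    rw [Complex.mul_conj, Complex.sq_norm]
  have has : s + starRingEnd ℂ s = ((2 * s.re : ℝ) : ℂ) := Complex.add_conj s
  rw [hms, hra 0] at c0
  rw [hms, has, hra 0, hra 1] at c1
  have hb0 : (‖s‖ ^ 2) * r 0 = 1 := by exact_mod_cast c0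
  have hb1 : (‖s‖ ^ 2) * r 1 = (2 * s.re) * r 0 := by exact_mod_cast c1
  have hbr : ∀ n : ℕ, (‖s‖ ^ 2) * r (n+2) = (2 * s.re) * r (n+1) - r n := by
    intro n
    have h := c2 n
    rw [hms, has, hra n, hra (n+1), hra (n+2)] at h
    exact_mod_cast h
  -- scalar transfer on operators
  have hsm : ∀ (n : ℕ) (B : Y →L[ℝ] Y), a n • B = r n • B := by
    intro n B
    rw [hra n]
    ext x
    simp only [ContinuousLinearMap.coe_smul', Pi.smul_apply]
    rw [← Complex.coe_algebraMap, algebraMap_smul]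
  have hsum : Summable (fun n : ℕ => r n • A ^ n) :=
    Summable.of_norm (hnsum.congr (fun n => by rw [hsm]))
  -- the operator computation
  haveI : IsScalarTower ℝ (Y →L[ℝ] Y) (Y →L[ℝ] Y) := IsScalarTower.right
  set c : ℝ := 2 * s.re with hcdef
  set b : ℝ := ‖s‖ ^ 2 with hbdef
  set Q : Y →L[ℝ] Y := A ^ 2 - c • A + b • 1 with hQ
  set S0 : Y →L[ℝ] Y := ∑' n : ℕ, r n • A ^ n with hS0
  have hsum1 : Summable (fun n : ℕ => r n • A ^ (n+1)) := by
    have := hsum.mul_right A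
    apply this.congr
    intro n
    rw [smul_mul_assoc, ← pow_succ]
  have hsum2 : Summable (fun n : ℕ => r n • A ^ (n+2)) := by
    have := hsum.mul_right (A ^ 2)
    apply this.congr
    intro n
    rw [smul_mul_assoc, ← pow_add]
  set S1 : Y →L[ℝ] Y := ∑' n : ℕ, r n • A ^ (n+1) with hS1
  set S2 : Y →L[ℝ] Y := ∑' n : ℕ, r n • A ^ (n+2) with hS2
  have hAS0 : A * S0 = S1 := by
    rw [hS0, ← hsum.tsum_mul_left A, hS1]
    apply tsum_congr
    intro n
    rw [mul_smul_comm, ← pow_succ']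
  have hA2S0 : A ^ 2 * S0 = S2 := by
    rw [hS0, ← hsum.tsum_mul_left (A ^ 2), hS2]
    apply tsum_congr
    intro n
    rw [mul_smul_comm]
    congr 1
    rw [← pow_add, Nat.add_comm]
  have hsum1' : Summable (fun n : ℕ => r (n+1) • A ^ (n+2)) :=
    (summable_nat_add_iff 1).2 hsum1
  have hsum1c : Summable (fun n : ℕ => (c * r (n+1)) • A ^ (n+2)) := by
    have := hsum1'.const_smul c
    apply this.congr
    intro n
    rw [smul_smul]
  have hshift1 : ∑' n : ℕ, r (n+1) • A ^ (n+2) = S1 - r 0 • A ^ 1 := by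
    have h := hsum1.tsum_eq_zero_add
    rw [← hS1] at h
    rw [eq_sub_iff_add_eq, add_comm, ← h]
  have hbS0 : b • S0 = 1 + c • S1 - S2 := by
    have hsb : Summable (fun n : ℕ => (b * r n) • A ^ n) := by
      have := hsum.const_smul b
      apply this.congr
      intro n; rw [smul_smul]
    have e0 : b • S0 = ∑' n : ℕ, (b * r n) • A ^ n := by
      rw [hS0, ← Summable.tsum_const_smul b hsum]
      apply tsum_congr
      intro n; rw [smul_smul]
    have e1 : ∑' n : ℕ, (b * r n) • A ^ n
        = (b * r 0) • A ^ 0 + ∑' n : ℕ, (b * r (n+1)) • A ^ (n+1) :=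
      hsb.tsum_eq_zero_add
    have e2 : ∑' n : ℕ, (b * r (n+1)) • A ^ (n+1)
        = (b * r 1) • A ^ 1 + ∑' n : ℕ, (b * r (n+2)) • A ^ (n+2) :=
      ((summable_nat_add_iff 1).2 hsb).tsum_eq_zero_add
    have e3 : ∑' n : ℕ, (b * r (n+2)) • A ^ (n+2)
        = c • (S1 - r 0 • A ^ 1) - S2 := by
      have e3a : ∀ n : ℕ, (b * r (n+2)) • A ^ (n+2)
          = (c * r (n+1)) • A ^ (n+2) - r n • A ^ (n+2) := by
        intro n
        rw [hbr n, sub_smul]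
      rw [tsum_congr e3a, hsum1c.tsum_sub hsum2, ← hshift1, ← hS2]
      congr 1
      rw [← Summable.tsum_const_smul c hsum1']
      apply tsum_congr
      intro n; rw [smul_smul]
    rw [e0, e1, e2, e3, hb0, hb1, pow_zero, one_smul, smul_sub, smul_smul]
    abel
  have hQS0 : Q * S0 = 1 := by
    rw [hQ, add_mul, sub_mul, smul_mul_assoc, smul_mul_assoc, one_mul,
      hAS0, hA2S0, hbS0]
    abel
  -- commutation and conclusion
  have hc : Commute A S0 := by
    apply Commute.tsum_right
    intro n
    exact ((Commute.refl A).pow_right n).smul_right (r n)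
  have hcommQ : Commute Q S0 := by
    rw [hQ]
    exact ((hc.pow_left 2).sub_left (hc.smul_left c)).add_left
      ((Commute.one_left S0).smul_left b)
  have hS0Q : S0 * Q = 1 := by
    rw [← hcommQ.eq]
    exact hQS0
  have hTS : (∑' n : ℕ, a n • A ^ n) = S0 := by
    rw [hS0]
    exact tsum_congr (fun n => hsm n _)
  refine ⟨hconj, hnsum, ?_, ?_⟩
  · exact ⟨⟨Q, S0, hQS0, hS0Q⟩, rfl⟩
  · rw [hTS]
    have : Ring.inverse ((⟨Q, S0, hQS0, hS0Q⟩ : (Y →L[ℝ] Y)ˣ) : Y →L[ℝ] Y)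
        = S0 := Ring.inverse_unit _
    exact this
end

section
/- Let Y be a complex Banach space, let A be a bounded ℝ-linear operator on Y, and let s ∈ ℂ with ‖A‖ < |s|. Then the left S-resolvent operator series, whose n-th term is the bounded ℝ-linear operator y ↦ Aⁿ(s^{−n−1}·y), converges absolutely in the operator norm, the operator Q_s(A) = A² − 2Re(s)A + |s|²I is invertible, and ∑_{n=0}^∞ (y ↦ Aⁿ(s^{−n−1}·y)) = −Q_s(A)⁻¹ ∘ (A − s̄I), where s̄I denotes the operator y ↦ s̄·y. -/
open Filter Finset

local notation "conj'" => starRingEnd ℂ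

/-- Coefficients of the power series of `Q_s(x)⁻¹ = 1/((s-x)(s̄-x))`. -/
noncomputable def srC (s : ℂ) (n : ℕ) : ℂ :=
  ∑ j ∈ Finset.range (n + 1), s ^ (-1 - (j : ℤ)) * (conj' s) ^ ((j : ℤ) - n - 1)

lemma srC_conj (s : ℂ) (n : ℕ) : conj' (srC s n) = srC s n := by
  unfold srC
  rw [map_sum]
  rw [← Finset.sum_range_reflect]
  refine Finset.sum_congr rfl ?_
  intro j hj
  simp only [Finset.mem_range] at hj
  rw [map_mul, map_zpow₀, map_zpow₀, Complex.conj_conj]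
  have hj' : (((n + 1 - 1 - j : ℕ)) : ℤ) = (n : ℤ) - j := by
    omega
  rw [hj']
  rw [show ((n:ℤ) - j) - n - 1 = -1 - (j:ℤ) by ring]
  rw [show (-1 - ((n:ℤ) - j)) = (j:ℤ) - n - 1 by ring]
  ring

lemma srC_rec1 {s : ℂ} (hs : s ≠ 0) (n : ℕ) :
    s * srC s (n + 1) = srC s n + (conj' s) ^ (-(n : ℤ) - 2) := by
  unfold srC
  rw [Finset.mul_sum, Finset.sum_range_succ']
  congr 1
  · refine Finset.sum_congr rfl ?_
    intro i _
    have e1 : (-1 - ((i + 1 : ℕ) : ℤ)) = -1 + (-1 - (i : ℤ)) := by push_cast; ring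
    have e2 : (((i + 1 : ℕ) : ℤ) - (n + 1 : ℕ) - 1) = (i : ℤ) - n - 1 := by push_cast; ring
    rw [e1, e2, zpow_add₀ hs, zpow_neg_one]
    field_simp
  · have e2 : (((0 : ℕ) : ℤ) - ((n + 1 : ℕ) : ℤ) - 1) = -(n : ℤ) - 2 := by push_cast; ring
    rw [e2]
    rw [show (-1 - ((0:ℕ):ℤ)) = (-1 : ℤ) by norm_num, zpow_neg_one]
    field_simp

lemma srC_rec2 {s : ℂ} (hs : s ≠ 0) (n : ℕ) :
    (conj' s) * srC s (n + 1) = srC s n + s ^ (-(n : ℤ) - 2) := by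
  have h := srC_rec1 (s := conj' s) (by simpa using hs) n
  have hc : ∀ m : ℕ, srC (conj' s) m = conj' (srC s m) := by
    intro m
    unfold srC
    rw [map_sum]
    refine Finset.sum_congr rfl ?_
    intro j _
    rw [map_mul, map_zpow₀, map_zpow₀, Complex.conj_conj]
  rw [hc, hc, srC_conj, srC_conj, Complex.conj_conj] at h
  exact h

lemma srC_zero (s : ℂ) : srC s 0 = s⁻¹ * (conj' s)⁻¹ := by
  unfold srC
  simp [zpow_neg_one]

lemma srC_abs {s : ℂ} (hs : s ≠ 0) (n : ℕ) :
    ‖srC s n‖ ≤ (n + 1) * ‖s‖ ^ (-(n : ℤ) - 2) := by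
  unfold srC
  refine le_trans (norm_sum_le _ _) ?_
  have h : ∀ j ∈ Finset.range (n+1),
      ‖s ^ (-1 - (j:ℤ)) * (conj' s) ^ ((j:ℤ) - n - 1)‖
        = ‖s‖ ^ (-(n:ℤ) - 2) := by
    intro j _
    rw [norm_mul, norm_zpow, norm_zpow, Complex.norm_conj,
      ← zpow_add₀ (by simpa using hs : ‖s‖ ≠ 0)]
    congr 1; ring
  rw [Finset.sum_congr rfl h, Finset.sum_const, Finset.card_range, nsmul_eq_mul]
  push_cast
  exact le_refl _

set_option synthInstance.maxHeartbeats 1000000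
set_option maxHeartbeats 4000000

section OpHelpers

variable {Y : Type*} [NormedAddCommGroup Y] [NormedSpace ℂ Y]

lemma op_pow_norm_le (A : Y →L[ℝ] Y) (k : ℕ) : ‖A ^ k‖ ≤ ‖A‖ ^ k := by
  induction k with
  | zero =>
      simpa [ContinuousLinearMap.one_def] using
        (ContinuousLinearMap.norm_id_le (𝕜 := ℝ) (E := Y))
  | succ k ih =>
      rw [pow_succ, pow_succ]
      exact le_trans (norm_mul_le _ _)
        (mul_le_mul ih le_rfl (norm_nonneg _) (pow_nonneg (norm_nonneg _) _))

lemma op_smul_one_norm (c : ℂ) : ‖c • (1 : Y →L[ℝ] Y)‖ ≤ ‖c‖ := by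
  refine ContinuousLinearMap.opNorm_le_bound _ (norm_nonneg c) fun y => ?_
  rw [show ((c • (1 : Y →L[ℝ] Y)) y) = c • y from rfl, norm_smul]

lemma op_rsmul_norm_le (r : ℝ) (T : Y →L[ℝ] Y) : ‖r • T‖ ≤ |r| * ‖T‖ :=
  le_trans (ContinuousLinearMap.opNorm_smul_le r T) (le_of_eq (by rw [Real.norm_eq_abs]))

lemma op_smul_comp (T : Y →L[ℝ] Y) (r : ℝ) (c : ℂ) :
    r • (T * (c • (1 : Y →L[ℝ] Y))) = T * (((r : ℂ) * c) • (1 : Y →L[ℝ] Y)) := by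
  ext y
  show r • (T (c • y)) = T (((r : ℂ) * c) • y)
  rw [mul_smul, Complex.coe_smul]
  exact (T.map_smul r (c • y)).symm

end OpHelpers

/-- Telescoping tsum. -/
lemma tsum_of_telescope {B : Type*} [NormedAddCommGroup B] [CompleteSpace B]
    (f v : ℕ → B) (hf : Summable f) (h : ∀ n, f n = v (n + 1) - v n)
    (hv : Filter.Tendsto v Filter.atTop (nhds 0)) : ∑' n, f n = -(v 0) := by
  have h1 := hf.hasSum.tendsto_sum_nat
  have h2 : (fun N => ∑ i ∈ Finset.range N, f i) = fun N => v N - v 0 := by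
    funext N
    calc ∑ i ∈ Finset.range N, f i = ∑ i ∈ Finset.range N, (v (i + 1) - v i) :=
          Finset.sum_congr rfl fun i _ => h i
      _ = v N - v 0 := Finset.sum_range_sub v N
  rw [h2] at h1
  have h3 : Filter.Tendsto (fun N => v N - v 0) Filter.atTop (nhds (0 - v 0)) :=
    hv.sub_const _
  rw [tendsto_nhds_unique h1 h3, zero_sub]

section Main

variable {Y : Type*} [NormedAddCommGroup Y] [NormedSpace ℂ Y]

/-- The operator `Q_s(A)`. -/
noncomputable def srQ (A : Y →L[ℝ] Y) (s : ℂ) : Y →L[ℝ] Y :=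
  A ^ 2 - (2 * s.re) • A + (‖s‖ ^ 2) • 1

/-- Terms of the left `S`-resolvent series. -/
noncomputable def srF (A : Y →L[ℝ] Y) (s : ℂ) (n : ℕ) : Y →L[ℝ] Y :=
  A ^ n * (s ^ (-(n : ℤ) - 1) • 1)

variable (A : Y →L[ℝ] Y) (s : ℂ)

lemma zp_succ {x : ℂ} (hx : x ≠ 0) (n : ℕ) : x * x ^ (-(n : ℤ) - 1) = x ^ (-(n : ℤ)) := by
  calc x * x ^ (-(n : ℤ) - 1) = x ^ (1 : ℤ) * x ^ (-(n : ℤ) - 1) := by rw [zpow_one]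
    _ = x ^ ((1 : ℤ) + (-(n : ℤ) - 1)) := (zpow_add₀ hx _ _).symm
    _ = x ^ (-(n : ℤ)) := by norm_num

lemma srF_norm_le (hs : ‖A‖ < ‖s‖) (n : ℕ) :
    ‖srF A s n‖ ≤ (‖A‖ / ‖s‖) ^ n * ‖s‖⁻¹ := by
  have hm0 : 0 < ‖s‖ := lt_of_le_of_lt (norm_nonneg A) hs
  refine le_trans (norm_mul_le _ _) (le_trans (mul_le_mul (op_pow_norm_le A n)
    (le_trans (op_smul_one_norm _) (le_of_eq (norm_zpow s _)))
    (norm_nonneg _) (pow_nonneg (norm_nonneg _) _)) ?_)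
  rw [show (-(n : ℤ) - 1) = -(((n + 1 : ℕ) : ℤ)) by push_cast; ring,
    zpow_neg, zpow_natCast, div_pow]
  apply le_of_eq
  rw [pow_succ, mul_inv, div_eq_mul_inv]
  ring

lemma srF_summable_norm (hs : ‖A‖ < ‖s‖) :
    Summable fun n : ℕ => ‖srF A s n‖ := by
  have hm0 : 0 < ‖s‖ := lt_of_le_of_lt (norm_nonneg A) hs
  have hr0 : 0 ≤ ‖A‖ / ‖s‖ := div_nonneg (norm_nonneg _) hm0.le
  have hr1 : ‖A‖ / ‖s‖ < 1 := (div_lt_one hm0).2 hs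
  exact Summable.of_nonneg_of_le (fun n => norm_nonneg _) (srF_norm_le A s hs)
    ((summable_geometric_of_lt_one hr0 hr1).mul_right _)

/-- The telescoping sequence for `Q · F`. -/
noncomputable def srU (A : Y →L[ℝ] Y) (s : ℂ) (k : ℕ) : Y →L[ℝ] Y :=
  A ^ (k + 1) * (s ^ (-(k : ℤ)) • 1) - A ^ k * ((starRingEnd ℂ s * s ^ (-(k : ℤ))) • 1)

lemma srQ_mul_term (hs0 : s ≠ 0) (n : ℕ) :
    srQ A s * srF A s n = srU A s (n + 1) - srU A s n := by
  simp only [srQ, srF, srU]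
  have hcast : (-(((n + 1) : ℕ) : ℤ)) = -(n : ℤ) - 1 := by push_cast; ring
  rw [hcast]
  rw [add_mul, sub_mul, smul_mul_assoc, smul_mul_assoc, one_mul]
  rw [← mul_assoc, ← mul_assoc, ← pow_add]
  rw [show 2 + n = n + 1 + 1 by omega]
  rw [← pow_succ']
  rw [op_smul_comp, op_smul_comp]
  have sc1 : ((2 * s.re : ℝ) : ℂ) * s ^ (-(n : ℤ) - 1)
      = starRingEnd ℂ s * s ^ (-(n : ℤ) - 1) + s ^ (-(n : ℤ)) := by
    rw [show ((2 * s.re : ℝ) : ℂ) = s + starRingEnd ℂ s from (Complex.add_conj s).symm,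
      ← zp_succ hs0]
    ring
  have sc2 : ((‖s‖ ^ 2 : ℝ) : ℂ) * s ^ (-(n : ℤ) - 1)
      = starRingEnd ℂ s * s ^ (-(n : ℤ)) := by
    rw [show ((‖s‖ ^ 2 : ℝ) : ℂ) = s * starRingEnd ℂ s from by
      rw [Complex.sq_norm, Complex.mul_conj], ← zp_succ hs0]
    ring
  rw [sc1, sc2, add_smul, mul_add]
  abel

lemma srU_tendsto (hs : ‖A‖ < ‖s‖) :
    Filter.Tendsto (srU A s) Filter.atTop (nhds 0) := by
  have hm0 : 0 < ‖s‖ := lt_of_le_of_lt (norm_nonneg A) hs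
  have hr0 : 0 ≤ ‖A‖ / ‖s‖ := div_nonneg (norm_nonneg _) hm0.le
  have hr1 : ‖A‖ / ‖s‖ < 1 := (div_lt_one hm0).2 hs
  refine squeeze_zero_norm (a := fun n =>
      (‖A‖ + ‖s‖) * (‖A‖ / ‖s‖) ^ n) (fun n => ?_) ?_
  · have hzp : ‖s‖ ^ (-(n : ℤ)) = (‖s‖ ^ n)⁻¹ := by
      rw [zpow_neg, zpow_natCast]
    have b1 : ‖A ^ (n + 1) * (s ^ (-(n : ℤ)) • (1 : Y →L[ℝ] Y))‖
        ≤ ‖A‖ ^ (n + 1) * (‖s‖ ^ n)⁻¹ := by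
      refine le_trans (norm_mul_le _ _) (mul_le_mul (op_pow_norm_le A _)
        (le_trans (op_smul_one_norm _) (le_of_eq ?_)) (norm_nonneg _)
        (pow_nonneg (norm_nonneg _) _))
      rw [norm_zpow, hzp]
    have b2 : ‖A ^ n * ((starRingEnd ℂ s * s ^ (-(n : ℤ))) • (1 : Y →L[ℝ] Y))‖
        ≤ ‖A‖ ^ n * (‖s‖ * (‖s‖ ^ n)⁻¹) := by
      refine le_trans (norm_mul_le _ _) (mul_le_mul (op_pow_norm_le A _)
        (le_trans (op_smul_one_norm _) (le_of_eq ?_)) (norm_nonneg _)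
        (pow_nonneg (norm_nonneg _) _))
      rw [norm_mul, norm_zpow, Complex.norm_conj, hzp]
    refine le_trans (norm_sub_le _ _) (le_trans (add_le_add b1 b2) (le_of_eq ?_))
    simp only [div_pow, pow_succ]
    field_simp
  · have := (tendsto_pow_atTop_nhds_zero_of_lt_one hr0 hr1).const_mul
      (‖A‖ + ‖s‖)
    simpa using this

lemma srF_summable (hs : ‖A‖ < ‖s‖) [CompleteSpace Y] :
    Summable (srF A s) :=
  (srF_summable_norm A s hs).of_norm

lemma srQ_mul_tsum [CompleteSpace Y] (hs : ‖A‖ < ‖s‖) :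
    srQ A s * ∑' n, srF A s n = -(A - starRingEnd ℂ s • 1) := by
  have hm0 : 0 < ‖s‖ := lt_of_le_of_lt (norm_nonneg A) hs
  have hs0 : s ≠ 0 := by
    intro h; rw [h] at hm0; simp at hm0
  rw [← Summable.tsum_mul_left _ (srF_summable A s hs)]
  rw [tsum_of_telescope _ (srU A s) ((srF_summable A s hs).mul_left _)
    (srQ_mul_term A s hs0) (srU_tendsto A s hs)]
  simp [srU]

/-- Real coefficients of the inverse series. -/
noncomputable def srG (s : ℂ) (n : ℕ) : ℝ := (srC s n).re

noncomputable def srAl (s : ℂ) : ℕ → ℝ := fun k => if k = 0 then 0 else srG s (k - 1)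

noncomputable def srR (A : Y →L[ℝ] Y) (s : ℂ) (n : ℕ) : Y →L[ℝ] Y := srG s n • A ^ n

noncomputable def srV (A : Y →L[ℝ] Y) (s : ℂ) (k : ℕ) : Y →L[ℝ] Y :=
  srAl s k • A ^ (k + 1) - (‖s‖ ^ 2 * srG s k) • A ^ k

lemma srG_complex (s : ℂ) (n : ℕ) : ((srG s n : ℝ) : ℂ) = srC s n :=
  Complex.conj_eq_iff_re.1 (srC_conj s n)

lemma habs2 (s : ℂ) : ((‖s‖ : ℝ) : ℂ) ^ 2 = s * starRingEnd ℂ s := by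
  rw [← Complex.ofReal_pow, Complex.sq_norm, Complex.mul_conj]

lemma h2re (s : ℂ) : (2 : ℂ) * (s.re : ℂ) = s + starRingEnd ℂ s := by
  rw [Complex.add_conj]; push_cast; ring

lemma srG_rec0 {s : ℂ} (hs0 : s ≠ 0) :
    2 * s.re * srG s 0 = ‖s‖ ^ 2 * srG s 1 := by
  have hc0 : starRingEnd ℂ s ≠ 0 := by simpa using hs0
  have h := srC_rec2 hs0 0
  have hexp : s ^ (-((0 : ℕ) : ℤ) - 2) = (s * s)⁻¹ := by
    rw [show (-((0 : ℕ) : ℤ) - 2) = -(2 : ℤ) by norm_num, zpow_neg]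
    congr 1
    rw [show ((2 : ℤ)) = ((2 : ℕ) : ℤ) by norm_num, zpow_natCast]
    ring
  rw [srC_zero, hexp] at h
  have key : (s + starRingEnd ℂ s) * srC s 0 = (s * starRingEnd ℂ s) * srC s 1 := by
    calc (s + starRingEnd ℂ s) * srC s 0
        = s * (s⁻¹ * (starRingEnd ℂ s)⁻¹ + (s * s)⁻¹) := by
          rw [srC_zero]; field_simp
      _ = s * (starRingEnd ℂ s * srC s 1) := by rw [← h]
      _ = (s * starRingEnd ℂ s) * srC s 1 := by ring
  have hC : ((2 * s.re * srG s 0 : ℝ) : ℂ) = ((‖s‖ ^ 2 * srG s 1 : ℝ) : ℂ) := by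
    push_cast [srG_complex]
    rw [habs2, ← key, ← h2re]
  exact_mod_cast hC

lemma srG_rec_succ {s : ℂ} (hs0 : s ≠ 0) (n : ℕ) :
    2 * s.re * srG s (n + 1) = ‖s‖ ^ 2 * srG s (n + 2) + srG s n := by
  have h1 := srC_rec2 hs0 n
  have h2 := srC_rec2 hs0 (n + 1)
  have hexp : s * s ^ (-(((n + 1) : ℕ) : ℤ) - 2) = s ^ (-(n : ℤ) - 2) := by
    rw [show (-(((n + 1) : ℕ) : ℤ) - 2) = (-(n : ℤ) - 2) + (-1) by push_cast; ring,
      zpow_add₀ hs0, zpow_neg_one]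
    field_simp
  have key : (s + starRingEnd ℂ s) * srC s (n + 1)
      = (s * starRingEnd ℂ s) * srC s (n + 2) + srC s n := by
    calc (s + starRingEnd ℂ s) * srC s (n + 1)
        = s * srC s (n + 1) + (srC s n + s ^ (-(n : ℤ) - 2)) := by rw [← h1]; ring
      _ = s * (srC s (n + 1) + s ^ (-(((n + 1) : ℕ) : ℤ) - 2)) + srC s n := by
          rw [mul_add, hexp]; ring
      _ = s * (starRingEnd ℂ s * srC s (n + 2)) + srC s n := by rw [← h2]
      _ = (s * starRingEnd ℂ s) * srC s (n + 2) + srC s n := by ring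
  have hC : ((2 * s.re * srG s (n + 1) : ℝ) : ℂ)
      = ((‖s‖ ^ 2 * srG s (n + 2) + srG s n : ℝ) : ℂ) := by
    push_cast [srG_complex]
    rw [habs2, ← key, ← h2re]
  exact_mod_cast hC

lemma srG_rec {s : ℂ} (hs0 : s ≠ 0) (n : ℕ) :
    2 * s.re * srG s n = ‖s‖ ^ 2 * srG s (n + 1) + srAl s n := by
  cases n with
  | zero => simpa [srAl] using srG_rec0 hs0
  | succ k => simpa [srAl] using srG_rec_succ hs0 k

lemma srQ_mul_R_term (hs0 : s ≠ 0) (n : ℕ) :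
    srQ A s * srR A s n = srV A s (n + 1) - srV A s n := by
  simp only [srQ, srR, srV]
  rw [mul_smul_comm]
  rw [add_mul, sub_mul, smul_mul_assoc, smul_mul_assoc, one_mul, ← pow_add]
  rw [show 2 + n = n + 1 + 1 by omega]
  rw [← pow_succ']
  rw [smul_add, smul_sub, smul_smul, smul_smul]
  rw [show srAl s (n + 1) = srG s n from by simp [srAl]]
  rw [show srG s n * (2 * s.re) = ‖s‖ ^ 2 * srG s (n + 1) + srAl s n from by
    rw [mul_comm]; exact srG_rec hs0 n]
  rw [show srG s n * (‖s‖ ^ 2) = ‖s‖ ^ 2 * srG s n from mul_comm _ _]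
  rw [add_smul]
  abel

lemma srG_abs {s : ℂ} (hs0 : s ≠ 0) (n : ℕ) :
    |srG s n| ≤ (n + 1) * ‖s‖ ^ (-(n : ℤ) - 2) :=
  le_trans (Complex.abs_re_le_norm _) (srC_abs hs0 n)

lemma sum_aux (r : ℝ) (hr0 : 0 ≤ r) (hr1 : r < 1) :
    Summable fun n : ℕ => ((n : ℝ) + 1) * r ^ n := by
  have h1 := summable_pow_mul_geometric_of_norm_lt_one (R := ℝ) 1
    (r := r) (by rwa [Real.norm_of_nonneg hr0])
  have h2 := summable_geometric_of_lt_one hr0 hr1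
  have := h1.add h2
  refine this.congr fun n => ?_
  ring

lemma srV_tendsto (hs : ‖A‖ < ‖s‖) :
    Filter.Tendsto (srV A s) Filter.atTop (nhds 0) := by
  have hm0 : 0 < ‖s‖ := lt_of_le_of_lt (norm_nonneg A) hs
  have hs0 : s ≠ 0 := by intro h; rw [h] at hm0; simp at hm0
  have hr0 : 0 ≤ ‖A‖ / ‖s‖ := div_nonneg (norm_nonneg _) hm0.le
  have hr1 : ‖A‖ / ‖s‖ < 1 := (div_lt_one hm0).2 hs
  have key : ∀ n : ℕ, ‖srV A s n‖ ≤ ((n : ℝ) + 1) * (‖A‖ / ‖s‖) ^ (n + 1)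
      + ((n : ℝ) + 1) * (‖A‖ / ‖s‖) ^ n := by
    intro n
    have hα : |srAl s n| ≤ ((n : ℝ) + 1) * ‖s‖ ^ (-(n : ℤ) - 1) := by
      cases n with
      | zero =>
          rw [show srAl s 0 = 0 from by simp [srAl], abs_zero]
          positivity
      | succ k =>
          rw [show srAl s (k + 1) = srG s k from by simp [srAl]]
          refine le_trans (srG_abs hs0 k) ?_
          rw [show (-((k + 1 : ℕ) : ℤ) - 1) = -(k : ℤ) - 2 by push_cast; ring]
          have : (0:ℝ) < ‖s‖ ^ (-(k : ℤ) - 2) := by positivity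
          refine mul_le_mul_of_nonneg_right ?_ this.le
          push_cast; linarith
    have z1 : ‖s‖ ^ (-(n : ℤ) - 1) = (‖s‖ ^ (n + 1))⁻¹ := by
      rw [show (-(n : ℤ) - 1) = -(((n + 1 : ℕ)) : ℤ) by push_cast; ring, zpow_neg, zpow_natCast]
    have z2 : ‖s‖ ^ (-(n : ℤ) - 2) = (‖s‖ ^ (n + 2))⁻¹ := by
      rw [show (-(n : ℤ) - 2) = -(((n + 2 : ℕ)) : ℤ) by push_cast; ring, zpow_neg, zpow_natCast]
    calc ‖srV A s n‖ ≤ |srAl s n| * ‖A‖ ^ (n + 1)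
          + |‖s‖ ^ 2 * srG s n| * ‖A‖ ^ n := by
          refine le_trans (norm_sub_le _ _) (add_le_add ?_ ?_)
          · exact le_trans (op_rsmul_norm_le _ _)
              (mul_le_mul_of_nonneg_left (op_pow_norm_le A _) (abs_nonneg _))
          · exact le_trans (op_rsmul_norm_le _ _)
              (mul_le_mul_of_nonneg_left (op_pow_norm_le A _) (abs_nonneg _))
      _ ≤ (((n : ℝ) + 1) * ‖s‖ ^ (-(n : ℤ) - 1)) * ‖A‖ ^ (n + 1)
          + (‖s‖ ^ 2 * (((n : ℝ) + 1) * ‖s‖ ^ (-(n : ℤ) - 2))) * ‖A‖ ^ n := by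
          refine add_le_add (mul_le_mul_of_nonneg_right hα (pow_nonneg (norm_nonneg _) _))
            (mul_le_mul_of_nonneg_right ?_ (pow_nonneg (norm_nonneg _) _))
          rw [abs_mul, abs_of_nonneg (by positivity : (0:ℝ) ≤ ‖s‖ ^ 2)]
          exact mul_le_mul_of_nonneg_left (srG_abs hs0 n) (by positivity)
      _ = ((n : ℝ) + 1) * (‖A‖ / ‖s‖) ^ (n + 1)
          + ((n : ℝ) + 1) * (‖A‖ / ‖s‖) ^ n := by
          rw [z1, z2, div_pow, div_pow]
          rw [pow_succ ‖s‖ (n + 1), pow_succ ‖s‖ n]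
          field_simp
  have S1 : Summable fun n : ℕ => ((n : ℝ) + 1) * (‖A‖ / ‖s‖) ^ (n + 1) :=
    ((sum_aux _ hr0 hr1).mul_right (‖A‖ / ‖s‖)).congr fun n => by
      rw [pow_succ]; ring
  have S2 := sum_aux _ hr0 hr1
  exact squeeze_zero_norm key (S1.add S2).tendsto_atTop_zero

lemma srR_summable_norm (hs : ‖A‖ < ‖s‖) :
    Summable fun n : ℕ => ‖srR A s n‖ := by
  have hm0 : 0 < ‖s‖ := lt_of_le_of_lt (norm_nonneg A) hs
  have hs0 : s ≠ 0 := by intro h; rw [h] at hm0; simp at hm0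
  have hr0 : 0 ≤ ‖A‖ / ‖s‖ := div_nonneg (norm_nonneg _) hm0.le
  have hr1 : ‖A‖ / ‖s‖ < 1 := (div_lt_one hm0).2 hs
  refine Summable.of_nonneg_of_le (fun n => norm_nonneg _) (fun n => ?_)
    ((sum_aux _ hr0 hr1).mul_right ((‖s‖ ^ 2)⁻¹))
  have z2 : ‖s‖ ^ (-(n : ℤ) - 2) = (‖s‖ ^ (n + 2))⁻¹ := by
    rw [show (-(n : ℤ) - 2) = -(((n + 2 : ℕ)) : ℤ) by push_cast; ring, zpow_neg, zpow_natCast]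
  calc ‖srR A s n‖ ≤ |srG s n| * ‖A‖ ^ n := by
        rw [srR]
        exact le_trans (op_rsmul_norm_le _ _)
          (mul_le_mul_of_nonneg_left (op_pow_norm_le A _) (abs_nonneg _))
    _ ≤ (((n : ℝ) + 1) * ‖s‖ ^ (-(n : ℤ) - 2)) * ‖A‖ ^ n :=
        mul_le_mul_of_nonneg_right (srG_abs hs0 n) (pow_nonneg (norm_nonneg _) _)
    _ = ((n : ℝ) + 1) * (‖A‖ / ‖s‖) ^ n * (‖s‖ ^ 2)⁻¹ := by
        rw [z2, div_pow, pow_add]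
        field_simp

lemma srR_summable [CompleteSpace Y] (hs : ‖A‖ < ‖s‖) :
    Summable (srR A s) :=
  (srR_summable_norm A s hs).of_norm

lemma srQR [CompleteSpace Y] (hs : ‖A‖ < ‖s‖) :
    srQ A s * (∑' n, srR A s n) = 1 := by
  have hm0 : 0 < ‖s‖ := lt_of_le_of_lt (norm_nonneg A) hs
  have hs0 : s ≠ 0 := by intro h; rw [h] at hm0; simp at hm0
  rw [← Summable.tsum_mul_left _ (srR_summable A s hs)]
  rw [tsum_of_telescope _ (srV A s) ((srR_summable A s hs).mul_left _)
    (srQ_mul_R_term A s hs0) (srV_tendsto A s hs)]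
  have h0 : ‖s‖ ^ 2 * srG s 0 = 1 := by
    have hC : ((‖s‖ ^ 2 * srG s 0 : ℝ) : ℂ) = ((1 : ℝ) : ℂ) := by
      push_cast [srG_complex]
      rw [habs2, srC_zero]
      have hc0 : starRingEnd ℂ s ≠ 0 := by simpa using hs0
      field_simp
    exact_mod_cast hC
  simp [srV, srAl, h0]

lemma srRQ [CompleteSpace Y] (hs : ‖A‖ < ‖s‖) :
    (∑' n, srR A s n) * srQ A s = 1 := by
  have hcom : ∀ n, srR A s n * srQ A s = srQ A s * srR A s n := by
    intro n
    have hk : Commute (A ^ n) (srQ A s) := by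
      unfold srQ
      exact (((Commute.refl A).pow_pow n 2).sub_right
        (((Commute.refl A).pow_left n).smul_right _)).add_right
        ((Commute.one_right _).smul_right _)
    calc srR A s n * srQ A s = srG s n • (A ^ n * srQ A s) := smul_mul_assoc _ _ _
      _ = srG s n • (srQ A s * A ^ n) := by rw [hk.eq]
      _ = srQ A s * srR A s n := (mul_smul_comm _ _ _).symm
  rw [← Summable.tsum_mul_right _ (srR_summable A s hs)]
  rw [tsum_congr hcom]
  rw [Summable.tsum_mul_left _ (srR_summable A s hs)]
  exact srQR A s hs

lemma srQ_isUnit [CompleteSpace Y] (hs : ‖A‖ < ‖s‖) : IsUnit (srQ A s) :=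
  ⟨⟨srQ A s, ∑' n, srR A s n, srQR A s hs, srRQ A s hs⟩, rfl⟩

lemma srT_eq [CompleteSpace Y] (hs : ‖A‖ < ‖s‖) :
    ∑' n, srF A s n = -(Ring.inverse (srQ A s) * (A - starRingEnd ℂ s • 1)) := by
  have h1 : Ring.inverse (srQ A s) * (srQ A s * ∑' n, srF A s n) = ∑' n, srF A s n := by
    rw [← mul_assoc, Ring.inverse_mul_cancel _ (srQ_isUnit A s hs), one_mul]
  rw [srQ_mul_tsum A s hs, mul_neg] at h1
  exact h1.symm

end Main

/-- the left S-resolvent operator series `∑ Aⁿ s^{-n-1}` (with the scalar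
acting on the right: `y ↦ Aⁿ(s^{−n−1}·y)`) converges absolutely and sums to
`−Q_s(A)⁻¹(A − s̄I)` when `‖A‖ < |s|`. -/
theorem stmt_8 {Y : Type*} [NormedAddCommGroup Y] [NormedSpace ℂ Y] [CompleteSpace Y]
    (A : Y →L[ℝ] Y) (s : ℂ) (hs : ‖A‖ < ‖s‖) :
    Summable (fun n : ℕ => ‖(A ^ n) ∘L (s ^ (-(n : ℤ) - 1) • (1 : Y →L[ℝ] Y))‖) ∧
    IsUnit (A ^ 2 - (2 * s.re) • A + (‖s‖ ^ 2) • (1 : Y →L[ℝ] Y)) ∧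
    ∑' n : ℕ, (A ^ n) ∘L (s ^ (-(n : ℤ) - 1) • (1 : Y →L[ℝ] Y))
      = -(Ring.inverse (A ^ 2 - (2 * s.re) • A + (‖s‖ ^ 2) • (1 : Y →L[ℝ] Y))
          ∘L (A - starRingEnd ℂ s • (1 : Y →L[ℝ] Y))) := by
  exact ⟨srF_summable_norm A s hs, srQ_isUnit A s hs, srT_eq A s hs⟩
end

section
/- Let Y be a complex Banach space, let A be a bounded ℝ-linear operator on Y, and let s ∈ ℂ with ‖A‖ < |s|. Then the right S-resolvent operator series, whose n-th term is the bounded ℝ-linear operator y ↦ s^{−n−1}·(Aⁿ y), converges absolutely in the operator norm, the operator Q_s(A) = A² − 2Re(s)A + |s|²I is invertible, and ∑_{n=0}^∞ (y ↦ s^{−n−1}·(Aⁿ y)) = −(A − s̄I) ∘ Q_s(A)⁻¹, where s̄I denotes the operator y ↦ s̄·y. -/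
open Finset Filter

namespace Stmt9Aux

noncomputable def hseq (x y : ℂ) (n : ℕ) : ℂ := ∑ k ∈ Finset.range (n+1), x ^ k * y ^ (n - k)

lemma hseq_zero (x y : ℂ) : hseq x y 0 = 1 := by simp [hseq]

lemma hseq_one (x y : ℂ) : hseq x y 1 = x + y := by
  simp [hseq, Finset.sum_range_succ]; ring

lemma hseq_succ (x y : ℂ) (n : ℕ) : hseq x y (n+1) = x * hseq x y n + y ^ (n+1) := by
  rw [hseq, Finset.sum_range_succ', hseq, Finset.mul_sum]
  simp only [pow_zero, one_mul, Nat.sub_zero]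
  congr 1
  refine Finset.sum_congr rfl fun k hk => ?_
  have hk' : k ≤ n := Nat.lt_succ_iff.mp (Finset.mem_range.mp hk)
  rw [show n + 1 - (k+1) = n - k by omega, pow_succ]
  ring

lemma hseq_succ' (x y : ℂ) (n : ℕ) : hseq x y (n+1) = y * hseq x y n + x ^ (n+1) := by
  rw [hseq, Finset.sum_range_succ, hseq, Finset.mul_sum]
  simp only [Nat.sub_self, pow_zero, mul_one]
  congr 1
  refine Finset.sum_congr rfl fun k hk => ?_
  have hk' : k ≤ n := Nat.lt_succ_iff.mp (Finset.mem_range.mp hk)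
  rw [show n + 1 - k = (n - k) + 1 by omega, pow_succ]
  ring

lemma hseq_rec (x y : ℂ) (n : ℕ) :
    hseq x y (n+2) = (x + y) * hseq x y (n+1) - x * y * hseq x y n := by
  have h1 : hseq x y (n+2) = x * hseq x y (n+1) + y ^ (n+2) := hseq_succ x y (n+1)
  have h2 : hseq x y (n+1) = y * hseq x y n + x ^ (n+1) := hseq_succ' x y n
  have h3 : hseq x y (n+1) = x * hseq x y n + y ^ (n+1) := hseq_succ x y n
  rw [h1, h2]
  linear_combination y * (h3.symm.trans h2)

lemma hseq_abs_le (x y : ℂ) (t : ℝ) (hx : ‖x‖ ≤ t) (hy : ‖y‖ ≤ t)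
    (ht : 0 ≤ t) (n : ℕ) : ‖hseq x y n‖ ≤ (n+1) * t ^ n := by
  calc ‖hseq x y n‖ ≤ ∑ k ∈ Finset.range (n+1), ‖x ^ k * y ^ (n-k)‖ :=
        norm_sum_le _ _
    _ ≤ ∑ _k ∈ Finset.range (n+1), t ^ n := by
        refine Finset.sum_le_sum fun k hk => ?_
        have hk' : k ≤ n := Nat.lt_succ_iff.mp (Finset.mem_range.mp hk)
        have hte : t ^ n = t ^ k * t ^ (n - k) := by
          rw [← pow_add]; congr 1; omega
        rw [norm_mul, norm_pow, norm_pow, hte]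
        exact mul_le_mul (pow_le_pow_left₀ (norm_nonneg x) hx k)
          (pow_le_pow_left₀ (norm_nonneg y) hy _)
          (pow_nonneg (norm_nonneg y) _) (pow_nonneg ht k)
    _ = (n+1) * t ^ n := by simp [mul_comm]

noncomputable def ecoef (s : ℂ) (n : ℕ) : ℂ :=
  s⁻¹ * ((starRingEnd ℂ) s)⁻¹ * hseq s⁻¹ ((starRingEnd ℂ) s)⁻¹ n

lemma conj_ne_zero' {s : ℂ} (hs : s ≠ 0) : (starRingEnd ℂ) s ≠ 0 := by
  simpa using hs

lemma habs_coe (s : ℂ) : ((‖s‖ ^ 2 : ℝ) : ℂ) = s * (starRingEnd ℂ) s := by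
  rw [Complex.mul_conj, Complex.normSq_eq_norm_sq]

lemma hre_coe (s : ℂ) : ((2 * s.re : ℝ) : ℂ) = s + (starRingEnd ℂ) s := by
  rw [Complex.add_conj]

lemma ecoef_rec (s : ℂ) (hs : s ≠ 0) (n : ℕ) :
    ((‖s‖ ^ 2 : ℝ) : ℂ) * ecoef s (n+2)
      = ((2 * s.re : ℝ) : ℂ) * ecoef s (n+1) - ecoef s n := by
  have hc := conj_ne_zero' hs
  rw [habs_coe, hre_coe, ecoef, hseq_rec, ecoef, ecoef]
  field_simp
  ring

lemma ecoef_base0 (s : ℂ) (hs : s ≠ 0) :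
    ((‖s‖ ^ 2 : ℝ) : ℂ) * ecoef s 0 = 1 := by
  have hc := conj_ne_zero' hs
  rw [habs_coe, ecoef, hseq_zero]
  field_simp

lemma ecoef_base1 (s : ℂ) (hs : s ≠ 0) :
    ((‖s‖ ^ 2 : ℝ) : ℂ) * ecoef s 1 = ((2 * s.re : ℝ) : ℂ) * ecoef s 0 := by
  have hc := conj_ne_zero' hs
  rw [habs_coe, hre_coe, ecoef, hseq_one, ecoef, hseq_zero]
  field_simp
  ring

lemma ecoef_abs_le (s : ℂ) (n : ℕ) :
    ‖ecoef s n‖ ≤ (n+1) * ‖s‖⁻¹ ^ (n+2) := by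
  have h1 : ‖s⁻¹‖ = ‖s‖⁻¹ := norm_inv _
  have h2 : ‖((starRingEnd ℂ) s)⁻¹‖ = ‖s‖⁻¹ := by
    rw [norm_inv, Complex.norm_conj]
  rw [ecoef, norm_mul, norm_mul, h1, h2]
  calc ‖s‖⁻¹ * ‖s‖⁻¹ * ‖hseq s⁻¹ ((starRingEnd ℂ) s)⁻¹ n‖
      ≤ ‖s‖⁻¹ * ‖s‖⁻¹ * ((n+1) * ‖s‖⁻¹ ^ n) := by
        have := hseq_abs_le s⁻¹ (((starRingEnd ℂ) s)⁻¹) (‖s‖⁻¹)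
          (le_of_eq h1) (le_of_eq h2) (by positivity) n
        exact mul_le_mul_of_nonneg_left this (by positivity)
    _ = (n+1) * ‖s‖⁻¹ ^ (n+2) := by ring

end Stmt9Aux

namespace Stmt9Aux

lemma aux_tendsto_zero (r : ℝ) (hr0 : 0 ≤ r) (hr1 : r < 1) :
    Filter.Tendsto (fun n : ℕ => ((n:ℝ)+2) * r ^ n) Filter.atTop (nhds 0) := by
  have S1 : Summable (fun n : ℕ => (n:ℝ)^1 * r^n) :=
    summable_pow_mul_geometric_of_norm_lt_one 1 (by rwa [Real.norm_eq_abs, abs_of_nonneg hr0])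
  have S0 : Summable (fun n : ℕ => r^n) := summable_geometric_of_lt_one hr0 hr1
  have h1 : Summable (fun n : ℕ => ((n:ℝ)+2) * r^n) := by
    refine (S1.add (S0.mul_left 2)).congr fun n => ?_
    push_cast; ring
  exact h1.tendsto_atTop_zero

lemma tendsto_norm_le_zero {M : Type*} [NormedAddCommGroup M] {w : ℕ → M} {C r : ℝ}
    (hr0 : 0 ≤ r) (hr1 : r < 1) (h : ∀ n, ‖w n‖ ≤ C * (((n:ℝ)+2) * r ^ n)) :
    Filter.Tendsto w Filter.atTop (nhds 0) := by
  rw [tendsto_zero_iff_norm_tendsto_zero]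
  have h2 := (aux_tendsto_zero r hr0 hr1).const_mul C
  rw [mul_zero] at h2
  exact squeeze_zero (fun n => norm_nonneg _) h h2

end Stmt9Aux

open Finset Filter Stmt9Aux

set_option maxHeartbeats 2000000 in
/-- the right S-resolvent operator series `∑ s^{-n-1} Aⁿ` (with the scalar
acting on the left: `y ↦ s^{−n−1}·(Aⁿ y)`) converges absolutely and sums to
`−(A − s̄I)Q_s(A)⁻¹` when `‖A‖ < |s|`. -/
theorem stmt_9 {Y : Type*} [NormedAddCommGroup Y] [NormedSpace ℂ Y] [CompleteSpace Y]
    (A : Y →L[ℝ] Y) (s : ℂ) (hs : ‖A‖ < ‖s‖) :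
    Summable (fun n : ℕ => ‖s ^ (-(n : ℤ) - 1) • (A ^ n)‖) ∧
    IsUnit (A ^ 2 - (2 * s.re) • A + (‖s‖ ^ 2) • (1 : Y →L[ℝ] Y)) ∧
    ∑' n : ℕ, s ^ (-(n : ℤ) - 1) • (A ^ n)
      = -((A - starRingEnd ℂ s • (1 : Y →L[ℝ] Y))
          ∘L Ring.inverse (A ^ 2 - (2 * s.re) • A + (‖s‖ ^ 2) • (1 : Y →L[ℝ] Y))) := by
  have hσ0 : (0:ℝ) < ‖s‖ := lt_of_le_of_lt (norm_nonneg A) hs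
  have hs0 : s ≠ 0 := by
    intro h; rw [h] at hσ0; simp at hσ0
  set σ : ℝ := ‖s‖ with hσdef
  set r : ℝ := ‖A‖ * σ⁻¹ with hrdef
  have hr0 : 0 ≤ r := mul_nonneg (norm_nonneg A) (inv_nonneg.mpr hσ0.le)
  have hr1 : r < 1 := by
    rw [hrdef, ← div_eq_mul_inv, div_lt_one hσ0]; exact hs
  have hApow : ∀ n : ℕ, ‖A ^ n‖ ≤ ‖A‖ ^ n := by
    intro n
    induction n with
    | zero => rw [pow_zero, pow_zero]; exact ContinuousLinearMap.norm_id_le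
    | succ n ih =>
      rw [pow_succ, pow_succ]
      exact le_trans (norm_mul_le _ _) (mul_le_mul_of_nonneg_right ih (norm_nonneg A))
  have hzpow : ∀ n : ℕ, s ^ (-(n:ℤ)-1) = s⁻¹ ^ (n+1) := by
    intro n
    rw [show (-(n:ℤ)-1) = -(((n+1:ℕ)):ℤ) by push_cast; ring, zpow_neg, zpow_natCast, inv_pow]
  have hboundC : ∀ (z : ℂ) (k : ℕ), ‖z • A ^ k‖ ≤ ‖z‖ * ‖A‖ ^ k := by
    intro z k
    calc ‖z • A ^ k‖ = ‖z‖ * ‖A ^ k‖ := norm_smul z (A ^ k)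
      _ ≤ ‖z‖ * ‖A‖ ^ k := by
          exact mul_le_mul_of_nonneg_left (hApow k) (norm_nonneg z)
  have hboundR : ∀ (x : ℝ) (k : ℕ), ‖x • A ^ k‖ ≤ |x| * ‖A‖ ^ k := by
    intro x k
    calc ‖x • A ^ k‖ = ‖x‖ * ‖A ^ k‖ := norm_smul x (A ^ k)
      _ ≤ |x| * ‖A‖ ^ k := by
          rw [Real.norm_eq_abs]
          exact mul_le_mul_of_nonneg_left (hApow k) (abs_nonneg x)
  -- Part 1: summability of the main series
  have hsum1 : Summable (fun n : ℕ => ‖s ^ (-(n : ℤ) - 1) • (A ^ n)‖) := by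
    refine Summable.of_nonneg_of_le (fun n => norm_nonneg _) (fun n => ?_)
      ((summable_geometric_of_lt_one hr0 hr1).mul_left σ⁻¹)
    rw [hzpow n]
    calc ‖s⁻¹ ^ (n+1) • A ^ n‖ ≤ ‖s⁻¹ ^ (n+1)‖ * ‖A‖ ^ n := hboundC _ n
      _ = σ⁻¹ * (σ⁻¹ ^ n * ‖A‖ ^ n) := by
          rw [norm_pow, norm_inv, ← hσdef, pow_succ]; ring
      _ = σ⁻¹ * r ^ n := by rw [hrdef, mul_pow]; ring_nf
  -- coefficients of the inverse of Q
  set c : ℕ → ℝ := fun n => (ecoef s n).re with hcdef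
  have hcabs : ∀ n : ℕ, |c n| ≤ ((n:ℝ)+1) * σ⁻¹ ^ (n+2) := by
    intro n
    show |(ecoef s n).re| ≤ ((n:ℝ)+1) * σ⁻¹ ^ (n+2)
    exact le_trans (Complex.abs_re_le_norm _) (ecoef_abs_le s n)
  have hcrec : ∀ n : ℕ, σ ^ 2 * c (n+2) = 2 * s.re * c (n+1) - c n := by
    intro n
    have := congrArg Complex.re (ecoef_rec s hs0 n)
    simpa only [Complex.re_ofReal_mul, Complex.sub_re] using this
  have hc0 : σ ^ 2 * c 0 = 1 := by
    have := congrArg Complex.re (ecoef_base0 s hs0)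
    simpa only [Complex.re_ofReal_mul, Complex.one_re] using this
  have hc1 : σ ^ 2 * c 1 = 2 * s.re * c 0 := by
    have := congrArg Complex.re (ecoef_base1 s hs0)
    simpa only [Complex.re_ofReal_mul, Complex.one_re] using this
  -- Q
  have hsmR : ∀ (x : ℝ) (B C : Y →L[ℝ] Y), (x • B) * C = x • (B * C) := fun _ _ _ => rfl
  set Q : Y →L[ℝ] Y := A ^ 2 - (2 * s.re) • A + (σ ^ 2) • 1 with hQdef
  have hQmul : ∀ n : ℕ, A ^ n * Q = A ^ (n+2) - (2 * s.re) • A ^ (n+1) + (σ ^ 2) • A ^ n := by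
    intro n
    rw [hQdef, mul_add, mul_sub, mul_smul_comm, mul_smul_comm, mul_one, ← pow_add, ← pow_succ]
  have hQmul' : ∀ n : ℕ, Q * A ^ n = A ^ (n+2) - (2 * s.re) • A ^ (n+1) + (σ ^ 2) • A ^ n := by
    intro n
    rw [hQdef, add_mul, sub_mul, hsmR, hsmR, one_mul, ← pow_add,
      ← pow_succ', Nat.add_comm 2 n]
  -- summability of the inverse series
  have hsumc : Summable (fun n : ℕ => ‖c n • A ^ n‖) := by
    have hbig : Summable (fun n : ℕ => (σ⁻¹ ^ 2) * (((n:ℝ)+2) * r ^ n)) := by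
      have S1 : Summable (fun n : ℕ => (n:ℝ)^1 * r^n) :=
        summable_pow_mul_geometric_of_norm_lt_one 1 (by rwa [Real.norm_eq_abs, abs_of_nonneg hr0])
      have S0 : Summable (fun n : ℕ => r^n) := summable_geometric_of_lt_one hr0 hr1
      refine ((S1.add (S0.mul_left 2)).mul_left (σ⁻¹ ^ 2)).congr fun n => ?_
      push_cast; ring
    refine Summable.of_nonneg_of_le (fun n => norm_nonneg _) (fun n => ?_) hbig
    calc ‖c n • A ^ n‖ ≤ |c n| * ‖A‖ ^ n := hboundR _ n
      _ ≤ (((n:ℝ)+1) * σ⁻¹ ^ (n+2)) * ‖A‖ ^ n :=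
          mul_le_mul_of_nonneg_right (hcabs n) (pow_nonneg (norm_nonneg A) n)
      _ ≤ (σ⁻¹ ^ 2) * (((n:ℝ)+2) * r ^ n) := by
          rw [hrdef, mul_pow, pow_add]
          have h1 : ((n:ℝ)+1) ≤ ((n:ℝ)+2) := by linarith
          calc ((n:ℝ)+1) * (σ⁻¹ ^ n * σ⁻¹ ^ 2) * ‖A‖ ^ n
              ≤ ((n:ℝ)+2) * (σ⁻¹ ^ n * σ⁻¹ ^ 2) * ‖A‖ ^ n := by
                refine mul_le_mul_of_nonneg_right (mul_le_mul_of_nonneg_right h1 ?_) ?_ <;> positivity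
            _ = σ⁻¹ ^ 2 * (((n:ℝ)+2) * (‖A‖ ^ n * σ⁻¹ ^ n)) := by ring
  set E : Y →L[ℝ] Y := ∑' n : ℕ, c n • A ^ n with hEdef
  have hE : HasSum (fun n : ℕ => c n • A ^ n) E := (Summable.of_norm hsumc).hasSum
  -- key telescoping identity for Q * partial sums
  have hkey : ∀ N : ℕ, Q * (∑ n ∈ Finset.range (N+1), c n • A ^ n)
      = 1 - (σ ^ 2 * c (N+1)) • A ^ (N+1) + c N • A ^ (N+2) := by
    intro N
    induction N with
    | zero =>
      rw [Finset.sum_range_one, mul_smul_comm, hQmul' 0]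
      simp only [pow_zero, zero_add, pow_one]
      match_scalars
      · ring
      · linear_combination hc1
      · linear_combination hc0
    | succ N ih =>
      rw [Finset.sum_range_succ, mul_add, ih, mul_smul_comm, hQmul' (N+1)]
      have hr2 := hcrec N
      have hr2' : σ^2 * c (2+N) = 2*s.re * c (1+N) - c N := by
        rw [Nat.add_comm 2 N, Nat.add_comm 1 N]; exact hr2
      match_scalars
      all_goals (try ring)
      linear_combination hr2'
  -- helper identities
  have hσ1 : σ * σ⁻¹ = 1 := mul_inv_cancel₀ hσ0.ne'
  have hσpow : ∀ k : ℕ, σ^2 * σ⁻¹^(k+2) = σ⁻¹^k := by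
    intro k
    calc σ^2 * σ⁻¹^(k+2) = (σ*σ⁻¹)^2 * σ⁻¹^k := by rw [mul_pow, pow_add]; ring
      _ = σ⁻¹^k := by rw [hσ1, one_pow, one_mul]
  have hrpow : ∀ k : ℕ, r^k = ‖A‖^k * σ⁻¹^k := fun k => by rw [hrdef, mul_pow]
  -- tail terms tend to zero
  have htail1 : Tendsto (fun N : ℕ => (σ ^ 2 * c (N+1)) • A ^ (N+1)) atTop (nhds 0) := by
    refine tendsto_norm_le_zero (C := σ⁻¹ * ‖A‖) hr0 hr1 (fun N => ?_)
    have hc' : |c (N+1)| ≤ ((N:ℝ)+2) * σ⁻¹^(N+3) := by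
      have h := hcabs (N+1)
      have e1 : ((↑(N+1):ℝ)+1) = (N:ℝ)+2 := by push_cast; ring
      rwa [e1, show N+1+2 = N+3 from rfl] at h
    calc ‖(σ^2 * c (N+1)) • A^(N+1)‖ ≤ |σ^2 * c (N+1)| * ‖A‖^(N+1) := hboundR _ _
      _ = σ^2 * |c (N+1)| * ‖A‖^(N+1) := by
          rw [abs_mul, abs_of_nonneg (by positivity : (0:ℝ) ≤ σ^2)]
      _ ≤ σ^2 * (((N:ℝ)+2) * σ⁻¹^(N+3)) * ‖A‖^(N+1) :=
          mul_le_mul_of_nonneg_right (mul_le_mul_of_nonneg_left hc' (by positivity)) (by positivity)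
      _ = (σ⁻¹ * ‖A‖) * (((N:ℝ)+2) * r^N) := by
          rw [hrpow N]
          linear_combination (((N:ℝ)+2) * ‖A‖^(N+1)) * hσpow (N+1)
  have htail2 : Tendsto (fun N : ℕ => c N • A ^ (N+2)) atTop (nhds 0) := by
    refine tendsto_norm_le_zero (C := σ⁻¹^2 * ‖A‖^2) hr0 hr1 (fun N => ?_)
    calc ‖c N • A^(N+2)‖ ≤ |c N| * ‖A‖^(N+2) := hboundR _ _
      _ ≤ (((N:ℝ)+1) * σ⁻¹^(N+2)) * ‖A‖^(N+2) :=
          mul_le_mul_of_nonneg_right (hcabs N) (by positivity)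
      _ = (σ⁻¹^2 * ‖A‖^2) * (((N:ℝ)+1) * r^N) := by rw [hrpow N]; ring
      _ ≤ (σ⁻¹^2 * ‖A‖^2) * (((N:ℝ)+2) * r^N) := by
          have h1 : ((N:ℝ)+1) ≤ (N:ℝ)+2 := by linarith
          refine mul_le_mul_of_nonneg_left (mul_le_mul_of_nonneg_right h1 (by positivity)) (by positivity)
  -- Q * E = 1
  have hQE : Q * E = 1 := by
    have t1 : Tendsto (fun N : ℕ => Q * ∑ n ∈ Finset.range (N+1), c n • A ^ n) atTop
        (nhds (Q * E)) := by
      have := (hE.tendsto_sum_nat.comp (tendsto_add_atTop_nat 1)).const_mul Q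
      simpa only [Function.comp_apply] using this
    have t2 : Tendsto (fun N : ℕ => Q * ∑ n ∈ Finset.range (N+1), c n • A ^ n) atTop
        (nhds 1) := by
      simp only [hkey]
      have := ((tendsto_const_nhds (x := (1 : Y →L[ℝ] Y))).sub htail1).add htail2
      simpa using this
    exact tendsto_nhds_unique t1 t2
  -- E * Q = 1
  have hcommS : ∀ N : ℕ, (∑ n ∈ Finset.range (N+1), c n • A ^ n) * Q
      = Q * ∑ n ∈ Finset.range (N+1), c n • A ^ n := by
    intro N
    rw [Finset.sum_mul, Finset.mul_sum]
    refine Finset.sum_congr rfl fun n _ => ?_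
    rw [hsmR, hQmul n, ← hQmul' n, mul_smul_comm]
  have hEQ : E * Q = 1 := by
    have t1 : Tendsto (fun N : ℕ => (∑ n ∈ Finset.range (N+1), c n • A ^ n) * Q) atTop
        (nhds (E * Q)) := by
      have := (hE.tendsto_sum_nat.comp (tendsto_add_atTop_nat 1)).mul_const Q
      simpa only [Function.comp_apply] using this
    have t2 : Tendsto (fun N : ℕ => (∑ n ∈ Finset.range (N+1), c n • A ^ n) * Q) atTop
        (nhds 1) := by
      simp only [hcommS, hkey]
      have := ((tendsto_const_nhds (x := (1 : Y →L[ℝ] Y))).sub htail1).add htail2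
      simpa using this
    exact tendsto_nhds_unique t1 t2
  have hQunit : IsUnit Q := ⟨⟨Q, E, hQE, hEQ⟩, rfl⟩
  have hinv : Ring.inverse Q = E := by
    rw [show Q = ((⟨Q, E, hQE, hEQ⟩ : (Y →L[ℝ] Y)ˣ) : Y →L[ℝ] Y) from rfl, Ring.inverse_unit]
    rfl
  refine ⟨hsum1, hQunit, ?_⟩
  rw [hinv]
  -- Part 3
  have hsmC : ∀ (z : ℂ) (B C : Y →L[ℝ] Y), (z • B) * C = z • (B * C) := fun _ _ _ => rfl
  have hcoe : ∀ (x : ℝ) (B : Y →L[ℝ] Y), (x:ℂ) • B = x • B := fun _ _ => rfl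
  have hss : s * s⁻¹ = 1 := mul_inv_cancel₀ hs0
  set T : Y →L[ℝ] Y := ∑' n : ℕ, s⁻¹ ^ (n+1) • A ^ n with hTdef
  have hsum1' : Summable fun n : ℕ => ‖s⁻¹ ^ (n+1) • A ^ n‖ := by
    refine hsum1.congr fun n => ?_
    rw [hzpow n]
  have hT : HasSum (fun n : ℕ => s⁻¹ ^ (n+1) • A ^ n) T := (Summable.of_norm hsum1').hasSum
  have hkey2 : ∀ N : ℕ, (∑ n ∈ Finset.range (N+1), s⁻¹ ^ (n+1) • A ^ n) * Q
      = (starRingEnd ℂ s) • 1 - A - ((starRingEnd ℂ s) * s⁻¹ ^ (N+1)) • A ^ (N+1)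
        + s⁻¹ ^ (N+1) • A ^ (N+2) := by
    intro N
    induction N with
    | zero =>
      rw [Finset.sum_range_one, hsmC, hQmul 0]
      rw [← hcoe (2*s.re) (A ^ (0+1)), ← hcoe (σ^2) (A ^ 0), hre_coe, hσdef, habs_coe]
      simp only [pow_zero, zero_add, pow_one]
      match_scalars
      all_goals (first
        | ring1
        | linear_combination (starRingEnd ℂ s) * hss
        | linear_combination (-(starRingEnd ℂ s)) * hss
        | linear_combination hss
        | linear_combination (-1 : ℂ) * hss)
    | succ N ih =>
      rw [Finset.sum_range_succ, add_mul, ih, hsmC, hQmul (N+1)]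
      rw [← hcoe (2*s.re) (A ^ (N+1+1)), ← hcoe (σ^2) (A ^ (N+1)), hre_coe, hσdef, habs_coe]
      match_scalars
      all_goals (first
        | ring1
        | linear_combination ((starRingEnd ℂ s) * s⁻¹^(N+1)) * hss
        | linear_combination (-((starRingEnd ℂ s) * s⁻¹^(N+1))) * hss
        | linear_combination (s⁻¹^(N+1)) * hss
        | linear_combination (-(s⁻¹^(N+1))) * hss)
  -- tails for part 3
  have htail3 : Tendsto (fun N : ℕ => ((starRingEnd ℂ s) * s⁻¹ ^ (N+1)) • A ^ (N+1)) atTop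
      (nhds 0) := by
    refine tendsto_norm_le_zero (C := σ * σ⁻¹ * ‖A‖) hr0 hr1 (fun N => ?_)
    calc ‖((starRingEnd ℂ s) * s⁻¹ ^ (N+1)) • A ^ (N+1)‖
        ≤ ‖(starRingEnd ℂ s) * s⁻¹ ^ (N+1)‖ * ‖A‖ ^ (N+1) := hboundC _ _
      _ = σ * σ⁻¹^(N+1) * ‖A‖^(N+1) := by
          rw [norm_mul, norm_pow, norm_inv, Complex.norm_conj, ← hσdef]
      _ = (σ * σ⁻¹ * ‖A‖) * (1 * r^N) := by rw [hrpow N]; ring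
      _ ≤ (σ * σ⁻¹ * ‖A‖) * (((N:ℝ)+2) * r^N) := by
          have h1 : (1:ℝ) ≤ (N:ℝ)+2 := by
            have h2 : (0:ℝ) ≤ (N:ℝ) := Nat.cast_nonneg N
            linarith
          refine mul_le_mul_of_nonneg_left (mul_le_mul_of_nonneg_right h1 (by positivity)) (by positivity)
  have htail4 : Tendsto (fun N : ℕ => s⁻¹ ^ (N+1) • A ^ (N+2)) atTop (nhds 0) := by
    refine tendsto_norm_le_zero (C := σ⁻¹ * ‖A‖^2) hr0 hr1 (fun N => ?_)
    calc ‖s⁻¹ ^ (N+1) • A ^ (N+2)‖ ≤ ‖s⁻¹ ^ (N+1)‖ * ‖A‖ ^ (N+2) := hboundC _ _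
      _ = σ⁻¹^(N+1) * ‖A‖^(N+2) := by rw [norm_pow, norm_inv, ← hσdef]
      _ = (σ⁻¹ * ‖A‖^2) * (1 * r^N) := by rw [hrpow N]; ring
      _ ≤ (σ⁻¹ * ‖A‖^2) * (((N:ℝ)+2) * r^N) := by
          have h1 : (1:ℝ) ≤ (N:ℝ)+2 := by
            have h2 : (0:ℝ) ≤ (N:ℝ) := Nat.cast_nonneg N
            linarith
          refine mul_le_mul_of_nonneg_left (mul_le_mul_of_nonneg_right h1 (by positivity)) (by positivity)
  have hTQ : T * Q = (starRingEnd ℂ s) • 1 - A := by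
    have t1 : Tendsto (fun N : ℕ => (∑ n ∈ Finset.range (N+1), s⁻¹ ^ (n+1) • A ^ n) * Q) atTop
        (nhds (T * Q)) := by
      have := (hT.tendsto_sum_nat.comp (tendsto_add_atTop_nat 1)).mul_const Q
      simpa only [Function.comp_apply] using this
    have t2 : Tendsto (fun N : ℕ => (∑ n ∈ Finset.range (N+1), s⁻¹ ^ (n+1) • A ^ n) * Q) atTop
        (nhds ((starRingEnd ℂ s) • 1 - A)) := by
      simp only [hkey2]
      have := ((tendsto_const_nhds (x := (starRingEnd ℂ s) • (1 : Y →L[ℝ] Y) - A)).sub htail3).add htail4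
      simpa using this
    exact tendsto_nhds_unique t1 t2
  have hTsum : (∑' n : ℕ, s ^ (-(n:ℤ) - 1) • A ^ n) = T := tsum_congr fun n => by rw [hzpow n]
  rw [hTsum]
  calc T = T * (Q * E) := by rw [hQE, mul_one]
    _ = (T * Q) * E := by rw [mul_assoc]
    _ = ((starRingEnd ℂ s) • 1 - A) * E := by rw [hTQ]
    _ = -((A - (starRingEnd ℂ s) • 1) * E) := by rw [← neg_mul, neg_sub]
    _ = -((A - (starRingEnd ℂ s) • 1) ∘L E) := rfl
end

section
/- Let Y be a complex Banach space, let A be a bounded ℝ-linear operator on Y, and let s ∈ ℂ be such that Q_s(A) = A² − 2Re(s)A + |s|²I is invertible. Set S_L^{-1}(s,A) = −Q_s(A)⁻¹(A − s̄I) and S_R^{-1}(s,A) = −(A − s̄I)Q_s(A)⁻¹. Then the left S-resolvent equation S_L^{-1}(s,A)·s − A ∘ S_L^{-1}(s,A) = I holds, where S_L^{-1}(s,A)·s is the operator y ↦ S_L^{-1}(s,A)(s·y); and the right S-resolvent equation s·S_R^{-1}(s,A) − S_R^{-1}(s,A) ∘ A = I holds, where s·S_R^{-1}(s,A) is the operator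 y ↦ s·(S_R^{-1}(s,A)y). -/
/-- the left and right S-resolvent equations
`S_L⁻¹(s,A)·s − A S_L⁻¹(s,A) = I` and `s·S_R⁻¹(s,A) − S_R⁻¹(s,A)A = I`. -/
theorem stmt_10 {Y : Type*} [NormedAddCommGroup Y] [NormedSpace ℂ Y] [CompleteSpace Y]
    (A : Y →L[ℝ] Y) (s : ℂ)
    (hQ : IsUnit (A ^ 2 - (2 * s.re) • A + (‖s‖ ^ 2) • (1 : Y →L[ℝ] Y)))
    (SL SR : Y →L[ℝ] Y)
    (hSL : SL = -(Ring.inverse (A ^ 2 - (2 * s.re) • A + (‖s‖ ^ 2) • (1 : Y →L[ℝ] Y))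
      ∘L (A - starRingEnd ℂ s • (1 : Y →L[ℝ] Y))))
    (hSR : SR = -((A - starRingEnd ℂ s • (1 : Y →L[ℝ] Y))
      ∘L Ring.inverse (A ^ 2 - (2 * s.re) • A + (‖s‖ ^ 2) • (1 : Y →L[ℝ] Y)))) :
    SL ∘L (s • (1 : Y →L[ℝ] Y)) - A ∘L SL = (1 : Y →L[ℝ] Y) ∧
    s • SR - SR ∘L A = (1 : Y →L[ℝ] Y) := by
  set Q : Y →L[ℝ] Y := A ^ 2 - (2 * s.re) • A + (‖s‖ ^ 2) • (1 : Y →L[ℝ] Y) with hQdef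
  set Qi : Y →L[ℝ] Y := Ring.inverse Q with hQidef
  set X : Y →L[ℝ] Y := A - starRingEnd ℂ s • (1 : Y →L[ℝ] Y) with hXdef
  have hSL' : SL = -(Qi * X) := hSL
  have hSR' : SR = -(X * Qi) := hSR
  have hQi1 : Qi * Q = 1 := Ring.inverse_mul_cancel Q hQ
  have h1Qi : Q * Qi = 1 := Ring.mul_inverse_cancel Q hQ
  have hc : Q * A = A * Q := by
    ext y
    simp only [hQdef, ContinuousLinearMap.mul_apply, ContinuousLinearMap.sub_apply,
      ContinuousLinearMap.add_apply, ContinuousLinearMap.smul_apply,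
      ContinuousLinearMap.one_apply, map_add, map_sub, map_smul, pow_two]
  have hAc : A * Qi = Qi * A := by
    conv_lhs => rw [← one_mul (A * Qi), ← hQi1]
    rw [mul_assoc Qi Q (A * Qi), ← mul_assoc Q A Qi, hc, mul_assoc A Q Qi, h1Qi, mul_one]
  have hsum : s + starRingEnd ℂ s = ((2 * s.re : ℝ) : ℂ) := by
    exact Complex.add_conj s
  have habs : starRingEnd ℂ s * s = ((‖s‖ ^ 2 : ℝ) : ℂ) := by
    rw [Complex.conj_mul']; norm_cast
  have habs' : s * starRingEnd ℂ s = ((‖s‖ ^ 2 : ℝ) : ℂ) := by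
    rw [mul_comm]; exact habs
  have key1 : A * X - X * (s • (1 : Y →L[ℝ] Y)) = Q := by
    ext y
    simp only [hQdef, hXdef, ContinuousLinearMap.sub_apply, ContinuousLinearMap.add_apply,
      ContinuousLinearMap.mul_apply, ContinuousLinearMap.smul_apply,
      ContinuousLinearMap.one_apply, map_smul, map_sub, pow_two]
    have h1 : A (s • y) + A ((starRingEnd ℂ s) • y) = (2 * s.re) • A y := by
      rw [← map_add, ← add_smul, hsum, Complex.coe_smul, map_smul]
    have h2 : (starRingEnd ℂ s) • (s • y) = (‖s‖ * ‖s‖) • y := by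
      rw [smul_smul, habs, Complex.coe_smul, pow_two]
    rw [← h1, ← h2]
    abel
  have key2 : X * A - (s • (1 : Y →L[ℝ] Y)) * X = Q := by
    ext y
    simp only [hQdef, hXdef, ContinuousLinearMap.sub_apply, ContinuousLinearMap.add_apply,
      ContinuousLinearMap.mul_apply, ContinuousLinearMap.smul_apply,
      ContinuousLinearMap.one_apply, map_smul, map_sub, pow_two]
    have h1 : s • A y + (starRingEnd ℂ s) • A y = (2 * s.re) • A y := by
      rw [← add_smul, hsum, Complex.coe_smul]
    have h2 : s • ((starRingEnd ℂ s) • y) = (‖s‖ * ‖s‖) • y := by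
      rw [smul_smul, habs', Complex.coe_smul, pow_two]
    rw [← h1, ← h2]
    abel
  constructor
  · show SL * (s • (1 : Y →L[ℝ] Y)) - A * SL = (1 : Y →L[ℝ] Y)
    rw [hSL', neg_mul, mul_neg, sub_neg_eq_add, mul_assoc Qi X (s • 1),
      ← mul_assoc A Qi X, hAc, mul_assoc Qi A X]
    rw [neg_add_eq_sub, ← mul_sub, key1, hQi1]
  · have hs : s • SR = (s • (1 : Y →L[ℝ] Y)) * SR := by ext y; simp
    rw [hs]
    show (s • (1 : Y →L[ℝ] Y)) * SR - SR * A = (1 : Y →L[ℝ] Y)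
    rw [hSR', mul_neg, neg_mul, sub_neg_eq_add, mul_assoc X Qi A, ← hAc,
      ← mul_assoc X A Qi, ← mul_assoc (s • 1) X Qi]
    rw [neg_add_eq_sub, ← sub_mul, key2, h1Qi]
end

section
/- Let Y be a complex Banach space and A a bounded ℝ-linear operator on Y. On the open set O = {(u,v) ∈ ℝ² : Q_{u,v} := A² − 2uA + (u²+v²)I is invertible}, define the operator-valued functions f₀(u,v) = −Q_{u,v}⁻¹(A − uI) and f₁(u,v) = −v·Q_{u,v}⁻¹. Then f₀ and f₁ are differentiable in u and v at every point of O, and they satisfy the Cauchy–Riemann equations ∂f₀/∂u − ∂f₁/∂v = 0 and ∂f₀/∂v + ∂f₁/∂u = 0 on O; consequently the left S-resolvent S_L^{-1}(s,A) is a right slice hyperholomorphic function of s on the S-resolvent set. -/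
set_option maxHeartbeats 1000000
set_option synthInstance.maxHeartbeats 400000

open ContinuousLinearMap in
lemma myHasDerivAt_ringInverse {M : Type*} [NormedRing M] [NormedAlgebra ℝ M] [CompleteSpace M]
    {c : ℝ → M} {c' : M} {x : ℝ} (hc : HasDerivAt c c' x) (h : IsUnit (c x)) :
    HasDerivAt (fun t => Ring.inverse (c t))
      (-(Ring.inverse (c x) * c' * Ring.inverse (c x))) x := by
  have hcoe : ((h.unit⁻¹ : Mˣ) : M) = Ring.inverse (c x) := by
    conv_rhs => rw [← h.unit_spec, Ring.inverse_unit]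
  have hf := hasFDerivAt_ringInverse (𝕜 := ℝ) h.unit
  rw [h.unit_spec] at hf
  have := hf.comp_hasDerivAt x hc
  simp [hcoe, mulLeftRight_apply, mul_assoc] at this ⊢
  exact this

/-- the components `f₀, f₁` of the left S-resolvent are differentiable in `u`
and `v` on the S-resolvent set and satisfy the Cauchy–Riemann equations there; hence
`S_L⁻¹(s,A)` is right slice hyperholomorphic in `s`. -/
theorem stmt_12 {Y : Type*} [NormedAddCommGroup Y] [NormedSpace ℂ Y] [CompleteSpace Y]
    (A : Y →L[ℝ] Y)
    (Q : ℝ → ℝ → (Y →L[ℝ] Y))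
    (hQDef : ∀ u v, Q u v = A ^ 2 - (2 * u) • A + (u ^ 2 + v ^ 2) • (1 : Y →L[ℝ] Y))
    (f₀ f₁ : ℝ → ℝ → (Y →L[ℝ] Y))
    (hf₀ : ∀ u v, f₀ u v = -(Ring.inverse (Q u v) ∘L (A - u • (1 : Y →L[ℝ] Y))))
    (hf₁ : ∀ u v, f₁ u v = -(v • Ring.inverse (Q u v))) :
    ∀ u v : ℝ, IsUnit (Q u v) →
      ∃ D₀u D₀v D₁u D₁v : Y →L[ℝ] Y,
        HasDerivAt (fun t => f₀ t v) D₀u u ∧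
        HasDerivAt (fun t => f₀ u t) D₀v v ∧
        HasDerivAt (fun t => f₁ t v) D₁u u ∧
        HasDerivAt (fun t => f₁ u t) D₁v v ∧
        D₀u - D₁v = 0 ∧
        D₀v + D₁u = 0 := by
  intro u v h
  set R : Y →L[ℝ] Y := Ring.inverse (Q u v) with hRdef
  set B : Y →L[ℝ] Y := A - u • 1 with hBdef
  have hRQ : R * Q u v = 1 := Ring.inverse_mul_cancel _ h
  have hQR : Q u v * R = 1 := Ring.mul_inverse_cancel _ h
  have hAQ : A * Q u v = Q u v * A := by
    rw [hQDef]
    simp only [mul_sub, sub_mul, mul_add, add_mul, mul_smul_comm, smul_mul_assoc, mul_one,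
      one_mul, pow_succ, pow_zero, mul_assoc]
  have hAR : R * A = A * R := by
    calc R * A = R * A * (Q u v * R) := by rw [hQR, mul_one]
      _ = R * (A * Q u v) * R := by simp only [mul_assoc]
      _ = R * (Q u v * A) * R := by rw [hAQ]
      _ = (R * Q u v) * (A * R) := by simp only [mul_assoc]
      _ = A * R := by rw [hRQ, one_mul]
  have hBR : B * R = R * B := by
    rw [hBdef]; simp only [sub_mul, mul_sub, smul_mul_assoc, mul_smul_comm, one_mul, mul_one, hAR]
  have hKey : B * B + (v ^ 2) • (1 : Y →L[ℝ] Y) = Q u v := by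
    rw [hBdef, hQDef]
    simp only [sub_mul, mul_sub, smul_mul_assoc, mul_smul_comm, one_mul, mul_one, smul_smul,
      pow_two]
    module
  -- derivative of Q in u
  have hQu : HasDerivAt (fun t => Q t v) ((-2 : ℝ) • B) u := by
    have h1 : HasDerivAt (fun t : ℝ => 2 * t) 2 u := by
      simpa using (hasDerivAt_id u).const_mul (2 : ℝ)
    have h2' : HasDerivAt (fun t : ℝ => t ^ 2 + v ^ 2) (2 * u) u := by
      simpa using (hasDerivAt_pow 2 u).add_const (v ^ 2)
    have h3 := ((hasDerivAt_const u (A ^ 2)).sub (h1.smul_const A)).add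
      (h2'.smul_const (1 : Y →L[ℝ] Y))
    simp only [hQDef]
    convert h3 using 1
    case e'_4 => rfl
    case e'_5 => rfl
    case e'_6 => rfl
    case e'_8 => rfl
    rw [hBdef]; module
  have hQv : HasDerivAt (fun t => Q u t) ((2 * v) • (1 : Y →L[ℝ] Y)) v := by
    have h2' : HasDerivAt (fun t : ℝ => u ^ 2 + t ^ 2) (2 * v) v := by
      simpa using (hasDerivAt_pow 2 v).const_add (u ^ 2)
    have h3 := (hasDerivAt_const v (A ^ 2 - (2 * u) • A)).add
      (h2'.smul_const (1 : Y →L[ℝ] Y))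
    simp only [hQDef]
    convert h3 using 1
    case e'_4 => rfl
    case e'_5 => rfl
    case e'_6 => rfl
    case e'_8 => rfl
    module
  -- derivatives of the inverse
  have hRu : HasDerivAt (fun t => Ring.inverse (Q t v)) ((2 : ℝ) • (R * B * R)) u := by
    have := myHasDerivAt_ringInverse (c := fun t => Q t v) hQu h
    convert this using 1
    case e'_4 => rfl
    case e'_5 => rfl
    case e'_6 => rfl
    rw [← hRdef]
    simp only [mul_smul_comm, smul_mul_assoc]
    module
  have hRv : HasDerivAt (fun t => Ring.inverse (Q u t)) (-((2 * v) • (R * R))) v := by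
    have := myHasDerivAt_ringInverse (c := fun t => Q u t) hQv h
    convert this using 1
    case e'_4 => rfl
    case e'_5 => rfl
    case e'_6 => rfl
    rw [← hRdef]
    simp only [mul_smul_comm, smul_mul_assoc, mul_one]
  -- derivatives of f₀ and f₁
  have hfun0u : (fun t => f₀ t v) = fun t => -(Ring.inverse (Q t v) * (A - t • 1)) := by
    funext t; rw [hf₀, ContinuousLinearMap.mul_def]
  have hfun0v : (fun t => f₀ u t) = fun t => -(Ring.inverse (Q u t) * B) := by
    funext t; rw [hf₀, ContinuousLinearMap.mul_def, hBdef]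
  have hfun1u : (fun t => f₁ t v) = fun t => -(v • Ring.inverse (Q t v)) := by
    funext t; rw [hf₁]
  have hfun1v : (fun t => f₁ u t) = fun t => -(t • Ring.inverse (Q u t)) := by
    funext t; rw [hf₁]
  have hlin : HasDerivAt (fun t : ℝ => A - t • (1 : Y →L[ℝ] Y)) (-(1 : Y →L[ℝ] Y)) u := by
    simpa using ((hasDerivAt_id u).smul_const (1 : Y →L[ℝ] Y)).const_sub A
  have hD0u : HasDerivAt (fun t => f₀ t v) ((-2 : ℝ) • (R * B * R * B) + R) u := by
    rw [hfun0u]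
    have := (hRu.mul hlin).neg
    convert this using 1
    case e'_4 => rfl
    case e'_5 => rfl
    case e'_6 => rfl
    case e'_8 => rfl
    rw [← hRdef, ← hBdef]
    simp only [smul_mul_assoc, mul_neg, mul_one]
    module
  have hD0v : HasDerivAt (fun t => f₀ u t) ((2 * v) • (R * R * B)) v := by
    rw [hfun0v]
    have := (hRv.mul (hasDerivAt_const v B)).neg
    convert this using 1
    case e'_4 => rfl
    case e'_5 => rfl
    case e'_6 => rfl
    case e'_8 => rfl
    rw [← hRdef]
    simp only [smul_mul_assoc, neg_mul, mul_zero, add_zero, neg_neg]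
  have hD1u : HasDerivAt (fun t => f₁ t v) (-((2 * v) • (R * B * R))) u := by
    rw [hfun1u]
    have := (hRu.const_smul v).neg
    convert this using 1
    case e'_4 => rfl
    case e'_5 => rfl
    case e'_6 => rfl
    case e'_8 => rfl
    module
  have hD1v : HasDerivAt (fun t => f₁ u t) ((2 * v ^ 2) • (R * R) - R) v := by
    rw [hfun1v]
    have := ((hasDerivAt_id v).smul hRv).neg
    convert this using 1
    case e'_4 => rfl
    case e'_5 => rfl
    case e'_6 => rfl
    case e'_8 => rfl
    rw [← hRdef]
    simp only [id_eq, smul_neg, smul_smul, one_smul, neg_add, neg_neg]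
    module
  refine ⟨_, _, _, _, hD0u, hD0v, hD1u, hD1v, ?_, ?_⟩
  · -- D₀u - D₁v = 0
    have key2 : R * B * R * B + (v ^ 2) • (R * R) = R := by
      have h1 : R * B * R * B = R * R * (B * B) := by
        calc R * B * R * B = R * (B * R) * B := by rw [mul_assoc R B R]
          _ = R * (R * B) * B := by rw [hBR]
          _ = R * R * (B * B) := by simp only [mul_assoc]
      rw [h1]
      calc R * R * (B * B) + (v ^ 2) • (R * R)
          = (R * R) * (B * B + (v ^ 2) • 1) := by rw [mul_add, mul_smul_comm, mul_one]
        _ = R * (R * Q u v) := by rw [hKey, mul_assoc]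
        _ = R := by rw [hRQ, mul_one]
    set X := R * B * R * B with hX
    set Z := R * R with hZ
    rw [← key2]
    module
  · -- D₀v + D₁u = 0
    have hcomm : R * R * B = R * B * R := by
      calc R * R * B = R * (R * B) := mul_assoc _ _ _
        _ = R * (B * R) := by rw [← hBR]
        _ = R * B * R := (mul_assoc _ _ _).symm
    rw [hcomm]
    module
end

section
/- Let Y be a complex Banach space, A a bounded ℝ-linear operator on Y, m ∈ ℕ, and r > ‖A‖. Then, parametrizing the circle of radius r by s(θ) = r·e^{iθ}, one has Aᵐ = (1/2π) ∫₀^{2π} S_L^{-1}(s(θ),A) ∘ (s(θ)^{m+1}·id) dθ, where S_L^{-1}(s,A) = −(A² − 2Re(s)A + |s|²I)⁻¹(A − s̄I) (which is defined since ‖A‖ < |s(θ)| = r) and c·id denotes the operator y ↦ c·y for c ∈ ℂ; the integral is a Bochner integral in the operator norm. (This is the contour integral (1/2π)∮ S_L^{-1}(s,A) ds_J sᵐ with ds_J = ds(−i), since along the circle ds_J = s(θ)dθ.) -/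
open scoped Real

set_option linter.unusedSectionVars false
set_option maxHeartbeats 1000000
set_option synthInstance.maxHeartbeats 400000
open scoped Real
open Complex

namespace Stmt14Aux
variable {Y : Type*} [NormedAddCommGroup Y] [NormedSpace ℂ Y] [CompleteSpace Y]

noncomputable def rho (Y : Type*) [NormedAddCommGroup Y] [NormedSpace ℂ Y] (c : ℂ) :
    Y →L[ℝ] Y := c • (1 : Y →L[ℝ] Y)

lemma rho_mul_eq_smul (c : ℂ) (B : Y →L[ℝ] Y) : rho Y c * B = c • B := by
  rw [show rho Y c * B = c • ((1 : Y →L[ℝ] Y) * B) from ContinuousLinearMap.smul_comp c 1 B,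
    one_mul]

lemma rho_mul (c d : ℂ) : rho Y (c * d) = rho Y c * rho Y d := by
  rw [rho_mul_eq_smul, rho, rho, smul_smul]

lemma rho_add (c d : ℂ) : rho Y (c + d) = rho Y c + rho Y d := add_smul c d 1

lemma mul_real_smul (r : ℝ) (B C : Y →L[ℝ] Y) : B * (r • C) = r • (B * C) :=
  ContinuousLinearMap.comp_smul B r C

lemma real_smul_mul (r : ℝ) (B C : Y →L[ℝ] Y) : (r • B) * C = r • (B * C) :=
  ContinuousLinearMap.smul_comp r B C

lemma mul_rho_real (r : ℝ) (B : Y →L[ℝ] Y) : B * rho Y (r : ℂ) = r • B := by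
  rw [rho, Complex.coe_smul, mul_real_smul, mul_one]

lemma norm_rho_le (c : ℂ) : ‖rho Y c‖ ≤ ‖c‖ := by
  calc ‖c • (1 : Y →L[ℝ] Y)‖ ≤ ‖c‖ * ‖(1 : Y →L[ℝ] Y)‖ := norm_smul_le c (1 : Y →L[ℝ] Y)
  _ ≤ ‖c‖ * 1 := by gcongr; exact ContinuousLinearMap.norm_id_le
  _ = ‖c‖ := mul_one _

variable (A : Y →L[ℝ] Y)

lemma norm_pow_le' (n : ℕ) : ‖A ^ n‖ ≤ ‖A‖ ^ n := by
  induction n with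
  | zero => rw [pow_zero, pow_zero]; exact ContinuousLinearMap.norm_id_le
  | succ n ih =>
      calc ‖A ^ (n+1)‖ = ‖A ^ n * A‖ := by rw [pow_succ]
      _ ≤ ‖A ^ n‖ * ‖A‖ := norm_mul_le _ _
      _ ≤ ‖A‖ ^ n * ‖A‖ := by gcongr
      _ = ‖A‖ ^ (n+1) := (pow_succ _ _).symm

/-- the terms of the left S-resolvent series -/
noncomputable def fT (z : ℂ) (n : ℕ) : Y →L[ℝ] Y := A ^ n * rho Y ((z⁻¹) ^ (n + 1))

lemma norm_fT_le (z : ℂ) (n : ℕ) : ‖fT A z n‖ ≤ ‖A‖ ^ n * ‖z‖⁻¹ ^ (n + 1) := by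
  calc ‖fT A z n‖ ≤ ‖A ^ n‖ * ‖rho Y ((z⁻¹) ^ (n+1))‖ := norm_mul_le _ _
  _ ≤ ‖A‖ ^ n * ‖z‖⁻¹ ^ (n + 1) := by
      apply mul_le_mul (norm_pow_le' A n) ?_ (norm_nonneg _) (by positivity)
      calc ‖rho Y ((z⁻¹) ^ (n+1))‖ ≤ ‖(z⁻¹) ^ (n+1)‖ := norm_rho_le _
      _ = ‖z‖⁻¹ ^ (n + 1) := by rw [norm_pow, norm_inv]

variable {A} {z : ℂ} (hz : ‖A‖ < ‖z‖)
include hz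

lemma summable_fT : Summable (fT A z) := by
  have hz0 : (0:ℝ) < ‖z‖ := lt_of_le_of_lt (norm_nonneg A) hz
  apply Summable.of_norm_bounded ?_ (norm_fT_le A z)
  have : Summable (fun n : ℕ => (‖A‖ * ‖z‖⁻¹) ^ n) := by
    apply summable_geometric_of_lt_one (by positivity)
    rw [← div_eq_mul_inv]
    exact (div_lt_one hz0).2 hz
  have := this.mul_left (‖z‖⁻¹)
  apply this.congr
  intro n
  rw [mul_pow, pow_succ']
  ring

omit hz in
noncomputable def T (A : Y →L[ℝ] Y) (z : ℂ) : Y →L[ℝ] Y := ∑' n, fT A z n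

lemma T_shift : T A z * rho Y z = 1 + A * T A z := by
  have hz0 : z ≠ 0 := by
    intro h; rw [h, norm_zero] at hz; exact absurd (lt_of_le_of_lt (norm_nonneg A) hz) (lt_irrefl 0)
  have h1 : T A z = fT A z 0 + ∑' n, fT A z (n + 1) := Summable.tsum_eq_zero_add (summable_fT hz)
  have h2 : ∀ n, fT A z (n + 1) = A * fT A z n * rho Y z⁻¹ := by
    intro n
    rw [fT, fT, mul_assoc, mul_assoc, ← rho_mul, ← pow_succ, pow_succ', mul_assoc]
  have h3 : ∑' n, fT A z (n + 1) = A * T A z * rho Y z⁻¹ := by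
    simp_rw [h2]
    rw [((summable_fT hz).mul_left A).tsum_mul_right (rho Y z⁻¹),
      (summable_fT hz).tsum_mul_left A]
    rfl
  have hrho1 : rho Y 1 = 1 := one_smul ℂ (1 : Y →L[ℝ] Y)
  have e0 : fT A z 0 * rho Y z = 1 := by
    rw [fT, pow_zero, pow_one, one_mul, ← rho_mul, inv_mul_cancel₀ hz0, hrho1]
  have e1 : A * T A z * rho Y z⁻¹ * rho Y z = A * T A z := by
    rw [mul_assoc, ← rho_mul, inv_mul_cancel₀ hz0, hrho1, mul_one]
  conv_lhs => rw [h1, h3]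
  rw [add_mul, e0, e1]


omit hz in
lemma comp_eq_mul (f g : Y →L[ℝ] Y) : f ∘L g = f * g := rfl

noncomputable def fU (A : Y →L[ℝ] Y) (z : ℂ) (n : ℕ) : Y →L[ℝ] Y :=
  rho Y ((z⁻¹) ^ (n + 1)) * A ^ n

omit hz in
lemma norm_fU_le (n : ℕ) :
    ‖fU A z n‖ ≤ ‖A‖ ^ n * ‖z‖⁻¹ ^ (n + 1) := by
  calc ‖fU A z n‖ ≤ ‖rho Y ((z⁻¹) ^ (n+1))‖ * ‖A ^ n‖ := norm_mul_le _ _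
  _ ≤ ‖z‖⁻¹ ^ (n + 1) * ‖A‖ ^ n := by
      apply mul_le_mul ?_ (norm_pow_le' A n) (norm_nonneg _) (by positivity)
      calc ‖rho Y ((z⁻¹) ^ (n+1))‖ ≤ ‖(z⁻¹) ^ (n+1)‖ := norm_rho_le _
      _ = ‖z‖⁻¹ ^ (n + 1) := by rw [norm_pow, norm_inv]
  _ = ‖A‖ ^ n * ‖z‖⁻¹ ^ (n + 1) := mul_comm _ _

lemma summable_fU : Summable (fU A z) := by
  have hz0 : (0:ℝ) < ‖z‖ := lt_of_le_of_lt (norm_nonneg A) hz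
  apply Summable.of_norm_bounded ?_ norm_fU_le
  have h1 : Summable (fun n : ℕ => (‖A‖ * ‖z‖⁻¹) ^ n) := by
    apply summable_geometric_of_lt_one (by positivity)
    rw [← div_eq_mul_inv]
    exact (div_lt_one hz0).2 hz
  apply (h1.mul_left (‖z‖⁻¹)).congr
  intro n
  rw [mul_pow, pow_succ']
  ring

omit hz in
noncomputable def U (A : Y →L[ℝ] Y) (z : ℂ) : Y →L[ℝ] Y := ∑' n, fU A z n

lemma U_shift : rho Y z * U A z = 1 + U A z * A := by
  have hz0 : z ≠ 0 := by
    intro h; rw [h, norm_zero] at hz; exact absurd (lt_of_le_of_lt (norm_nonneg A) hz) (lt_irrefl 0)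
  have hrho1 : rho Y 1 = 1 := one_smul ℂ (1 : Y →L[ℝ] Y)
  have h1 : U A z = fU A z 0 + ∑' n, fU A z (n + 1) := Summable.tsum_eq_zero_add (summable_fU hz)
  have h2 : ∀ n, fU A z (n + 1) = rho Y z⁻¹ * fU A z n * A := by
    intro n
    rw [fU, fU, pow_succ A, pow_succ' z⁻¹, rho_mul, mul_assoc, mul_assoc, mul_assoc]
  have h3 : ∑' n, fU A z (n + 1) = rho Y z⁻¹ * U A z * A := by
    simp_rw [h2]
    rw [((summable_fU hz).mul_left (rho Y z⁻¹)).tsum_mul_right A,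
      (summable_fU hz).tsum_mul_left (rho Y z⁻¹)]
    rfl
  have e0 : rho Y z * fU A z 0 = 1 := by
    rw [fU, pow_zero, pow_one, mul_one, ← rho_mul, mul_inv_cancel₀ hz0, hrho1]
  have e1 : rho Y z * (rho Y z⁻¹ * U A z * A) = U A z * A := by
    rw [← mul_assoc, ← mul_assoc, ← rho_mul, mul_inv_cancel₀ hz0, hrho1, one_mul]
  conv_lhs => rw [h1, mul_add, h3]
  rw [e0, e1]

/-- the operator `Q_s(A)` exactly as in the statement -/
noncomputable def Q (A : Y →L[ℝ] Y) (z : ℂ) : Y →L[ℝ] Y :=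
  A ^ 2 - (2 * z.re) • A + (‖z‖ ^ 2) • (1 : Y →L[ℝ] Y)

lemma Q_mul_T : Q A z * T A z = rho Y (starRingEnd ℂ z) - A := by
  have hTz : T A z * rho Y z = 1 + A * T A z := T_shift hz
  have h4 : A * T A z = T A z * rho Y z - 1 := by rw [hTz, add_sub_cancel_left]
  have h2re : ((2 * z.re : ℝ) : ℂ) = z + starRingEnd ℂ z := (Complex.add_conj z).symm
  have habs : ((‖z‖ ^ 2 : ℝ) : ℂ) = z * starRingEnd ℂ z := by
    rw [Complex.sq_norm, Complex.mul_conj]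
  have e1 : Q A z * T A z
      = A * (A * T A z) - (A * T A z) * rho Y (z + starRingEnd ℂ z)
        + T A z * rho Y (z * starRingEnd ℂ z) := by
    rw [Q, add_mul, sub_mul, real_smul_mul, real_smul_mul, one_mul, pow_two, mul_assoc,
      ← h2re, ← habs, mul_rho_real, mul_rho_real]
  rw [e1, rho_add, rho_mul, mul_add, ← mul_assoc (T A z), hTz]
  have e2 : A * (A * T A z) = (A * T A z) * rho Y z - A := by
    conv_lhs => rw [h4]
    rw [mul_sub, mul_one, ← mul_assoc]
  rw [e2, add_mul, one_mul]
  abel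

lemma U_mul_Q : U A z * Q A z = rho Y (starRingEnd ℂ z) - A := by
  have hUz : rho Y z * U A z = 1 + U A z * A := U_shift hz
  have h4 : U A z * A = rho Y z * U A z - 1 := by rw [hUz, add_sub_cancel_left]
  have h2re : ((2 * z.re : ℝ) : ℂ) = z + starRingEnd ℂ z := (Complex.add_conj z).symm
  have habs : ((‖z‖ ^ 2 : ℝ) : ℂ) = starRingEnd ℂ z * z := by
    rw [mul_comm, Complex.sq_norm, Complex.mul_conj]
  have e1 : U A z * Q A z
      = (U A z * A) * A - rho Y (z + starRingEnd ℂ z) * (U A z * A)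
        + rho Y (starRingEnd ℂ z * z) * U A z := by
    have hr1 : rho Y ((2 * z.re : ℝ) : ℂ) * (U A z * A) = (2 * z.re) • (U A z * A) := by
      rw [rho_mul_eq_smul, Complex.coe_smul]
    have hr2 : rho Y ((‖z‖ ^ 2 : ℝ) : ℂ) * U A z = (‖z‖ ^ 2) • U A z := by
      rw [rho_mul_eq_smul, Complex.coe_smul]
    rw [Q, mul_add, mul_sub, mul_real_smul, mul_real_smul, mul_one, pow_two, ← mul_assoc,
      ← h2re, ← habs, hr1, hr2]
  rw [e1, rho_add, rho_mul, add_mul, mul_assoc (rho Y (starRingEnd ℂ z)), hUz]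
  have e2 : (U A z * A) * A = rho Y z * (U A z * A) - A := by
    conv_lhs => rw [h4]
    rw [sub_mul, one_mul, mul_assoc]
  rw [e2, mul_add, mul_one]
  abel

omit hz in
lemma Q_def : Q A z = A ^ 2 - (2 * z.re) • A + (‖z‖ ^ 2) • (1 : Y →L[ℝ] Y) := rfl

lemma T_mul_rho (c : ℂ) : T A z * rho Y c = ∑' n, A ^ n * rho Y ((z⁻¹) ^ (n + 1) * c) := by
  rw [show T A z = ∑' n, fT A z n from rfl, ← (summable_fT hz).tsum_mul_right (rho Y c)]
  congr 1
  funext n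
  rw [fT, mul_assoc, ← rho_mul]

lemma summable_fT_mul_rho (c : ℂ) : Summable (fun n => A ^ n * rho Y ((z⁻¹) ^ (n + 1) * c)) := by
  have h := (summable_fT hz).mul_right (rho Y c)
  apply h.congr
  intro n
  rw [fT, mul_assoc, ← rho_mul]

attribute [irreducible] fT T fU U Q

lemma key : -(Ring.inverse (Q A z) ∘L (A - starRingEnd ℂ z • (1 : Y →L[ℝ] Y))) = T A z := by
  have hz0 : z ≠ 0 := by
    intro h; rw [h, norm_zero] at hz; exact absurd (lt_of_le_of_lt (norm_nonneg A) hz) (lt_irrefl 0)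
  have hzb : starRingEnd ℂ z ≠ 0 := by simpa using hz0
  have hrho1 : rho Y 1 = 1 := one_smul ℂ (1 : Y →L[ℝ] Y)
  have hx : ‖(starRingEnd ℂ z)⁻¹ • A‖ < 1 := by
    have h1 : (starRingEnd ℂ z)⁻¹ • A = rho Y ((starRingEnd ℂ z)⁻¹) * A :=
      (rho_mul_eq_smul _ _).symm
    have h2 : ‖rho Y ((starRingEnd ℂ z)⁻¹) * A‖ ≤ ‖z‖⁻¹ * ‖A‖ := by
      calc ‖rho Y ((starRingEnd ℂ z)⁻¹) * A‖ ≤ ‖rho Y ((starRingEnd ℂ z)⁻¹)‖ * ‖A‖ :=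
        norm_mul_le _ _
      _ ≤ ‖(starRingEnd ℂ z)⁻¹‖ * ‖A‖ := by gcongr; exact norm_rho_le _
      _ = ‖z‖⁻¹ * ‖A‖ := by rw [norm_inv, RCLike.norm_conj]
    have hz0' : (0:ℝ) < ‖z‖ := lt_of_le_of_lt (norm_nonneg A) hz
    have h3 : ‖z‖⁻¹ * ‖A‖ < ‖z‖⁻¹ * ‖z‖ := (mul_lt_mul_iff_right₀ (inv_pos.2 hz0')).2 hz
    rw [h1]
    calc ‖rho Y ((starRingEnd ℂ z)⁻¹) * A‖ ≤ ‖z‖⁻¹ * ‖A‖ := h2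
    _ < ‖z‖⁻¹ * ‖z‖ := h3
    _ = 1 := inv_mul_cancel₀ (ne_of_gt hz0')
  obtain ⟨w, hw⟩ : ∃ w : (Y →L[ℝ] Y)ˣ, (w : Y →L[ℝ] Y) = rho Y (starRingEnd ℂ z) - A := by
    refine ⟨(⟨rho Y (starRingEnd ℂ z), rho Y ((starRingEnd ℂ z)⁻¹),
        by rw [← rho_mul, mul_inv_cancel₀ hzb, hrho1],
        by rw [← rho_mul, inv_mul_cancel₀ hzb, hrho1]⟩ : (Y →L[ℝ] Y)ˣ)
      * Units.oneSub ((starRingEnd ℂ z)⁻¹ • A) hx, ?_⟩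
    rw [Units.val_mul, Units.val_oneSub]
    show rho Y (starRingEnd ℂ z) * (1 - (starRingEnd ℂ z)⁻¹ • A) = _
    rw [mul_sub, mul_one, rho_mul_eq_smul, smul_smul, mul_inv_cancel₀ hzb, one_smul]
  have qr : Q A z * (T A z * ↑w⁻¹) = 1 := by
    rw [← mul_assoc, Q_mul_T hz, ← hw, w.mul_inv]
  have ql : (↑w⁻¹ * U A z) * Q A z = 1 := by
    rw [mul_assoc, U_mul_Q hz, ← hw, w.inv_mul]
  have hbc : (↑w⁻¹ * U A z : Y →L[ℝ] Y) = T A z * ↑w⁻¹ := by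
    calc (↑w⁻¹ * U A z : Y →L[ℝ] Y) = (↑w⁻¹ * U A z) * (Q A z * (T A z * ↑w⁻¹)) := by
          rw [qr, mul_one]
    _ = ((↑w⁻¹ * U A z) * Q A z) * (T A z * ↑w⁻¹) := by rw [← mul_assoc]
    _ = T A z * ↑w⁻¹ := by rw [ql, one_mul]
  have bQ : (T A z * ↑w⁻¹) * Q A z = 1 := by rw [← hbc]; exact ql
  obtain ⟨v, hv1, hv2⟩ : ∃ v : Y →L[ℝ] Y, Q A z * v = 1 ∧ v * Q A z = 1 :=
    ⟨T A z * ↑w⁻¹, qr, bQ⟩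
  have hu : IsUnit (Q A z) := ⟨⟨Q A z, v, hv1, hv2⟩, rfl⟩
  have hcomp : -(Ring.inverse (Q A z) ∘L (A - starRingEnd ℂ z • (1 : Y →L[ℝ] Y)))
      = Ring.inverse (Q A z) * (rho Y (starRingEnd ℂ z) - A) := by
    rw [comp_eq_mul, show starRingEnd ℂ z • (1 : Y →L[ℝ] Y) = rho Y (starRingEnd ℂ z) from rfl,
      ← mul_neg, neg_sub]
  rw [hcomp, ← Q_mul_T hz, ← mul_assoc, Ring.inverse_mul_cancel _ hu, one_mul]

end Stmt14Aux


open Stmt14Aux MeasureTheory in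
/-- Cauchy integral formula for powers:
`Aᵐ = (1/2π) ∫₀^{2π} S_L⁻¹(s(θ),A) ∘ (s(θ)^{m+1}·id) dθ` on the circle `s(θ) = r e^{iθ}`,
`r > ‖A‖`. -/
theorem stmt_14 {Y : Type*} [NormedAddCommGroup Y] [NormedSpace ℂ Y] [CompleteSpace Y]
    (A : Y →L[ℝ] Y) (m : ℕ) (r : ℝ) (hr : ‖A‖ < r)
    (s : ℝ → ℂ) (hs : ∀ θ, s θ = r * Complex.exp (θ * Complex.I))
    (SL : ℂ → (Y →L[ℝ] Y))
    (hSL : ∀ z : ℂ, SL z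
      = -(Ring.inverse (A ^ 2 - (2 * z.re) • A + (‖z‖ ^ 2) • (1 : Y →L[ℝ] Y))
          ∘L (A - starRingEnd ℂ z • (1 : Y →L[ℝ] Y)))) :
    A ^ m = (1 / (2 * π)) •
      ∫ θ in (0:ℝ)..(2 * π), SL (s θ) ∘L ((s θ ^ (m + 1)) • (1 : Y →L[ℝ] Y)) := by
  have hr0 : (0:ℝ) < r := lt_of_le_of_lt (norm_nonneg A) hr
  have hnorm : ∀ θ : ℝ, ‖s θ‖ = r := by
    intro θ
    rw [hs θ, norm_mul, Complex.norm_real, Complex.norm_exp_ofReal_mul_I, mul_one,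
      Real.norm_eq_abs, abs_of_pos hr0]
  have hzθ : ∀ θ : ℝ, ‖A‖ < ‖s θ‖ := fun θ => (hnorm θ).symm ▸ hr
  have hsne : ∀ θ : ℝ, s θ ≠ 0 := by
    intro θ h
    have h2 := hnorm θ
    rw [h, norm_zero] at h2
    exact (ne_of_gt hr0) h2.symm
  have hscont : Continuous s := by
    have : Continuous fun θ : ℝ => (r : ℂ) * Complex.exp (θ * Complex.I) := by
      apply continuous_const.mul
      exact Complex.continuous_exp.comp ((Complex.continuous_ofReal).mul continuous_const)
    exact this.congr fun θ => (hs θ).symm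
  -- the integrand as a tsum
  set F : ℕ → ℝ → (Y →L[ℝ] Y) :=
    fun n θ => A ^ n * rho Y (((s θ)⁻¹) ^ (n + 1) * (s θ) ^ (m + 1)) with hF
  have hint : ∀ θ : ℝ, SL (s θ) ∘L ((s θ ^ (m + 1)) • (1 : Y →L[ℝ] Y))
      = ∑' n, F n θ := by
    intro θ
    rw [hSL (s θ), ← Q_def, key (hzθ θ), comp_eq_mul,
      show (s θ ^ (m + 1)) • (1 : Y →L[ℝ] Y) = rho Y (s θ ^ (m + 1)) from rfl,
      T_mul_rho (hzθ θ)]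
  -- continuous linear maps used to pull integrals inside
  set L : ℕ → (ℂ →L[ℝ] (Y →L[ℝ] Y)) := fun n =>
    ((ContinuousLinearMap.mul ℝ (Y →L[ℝ] Y)) (A ^ n)).comp
      ((ContinuousLinearMap.id ℝ ℂ).smulRight (1 : Y →L[ℝ] Y)) with hL
  have hLapp : ∀ n c, L n c = A ^ n * rho Y c := fun n c => rfl
  -- the scalar functions
  set g : ℕ → ℝ → ℂ := fun n θ => ((s θ)⁻¹) ^ (n + 1) * (s θ) ^ (m + 1) with hg
  have hgcont : ∀ n, Continuous (g n) := by
    intro n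
    exact ((hscont.inv₀ hsne).pow _).mul (hscont.pow _)
  have hFcont : ∀ n, Continuous (F n) := by
    intro n
    exact continuous_const.mul ((hgcont n).smul continuous_const)
  have hFbound : ∀ n θ, ‖F n θ‖ ≤ ‖A‖ ^ n * (r⁻¹ ^ (n + 1) * r ^ (m + 1)) := by
    intro n θ
    calc ‖F n θ‖ ≤ ‖A ^ n‖ * ‖rho Y (g n θ)‖ := norm_mul_le _ _
    _ ≤ ‖A‖ ^ n * ‖g n θ‖ := by
        apply mul_le_mul (norm_pow_le' A n) (norm_rho_le _) (norm_nonneg _) (by positivity)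
    _ = ‖A‖ ^ n * (r⁻¹ ^ (n + 1) * r ^ (m + 1)) := by
        rw [hg]
        simp only [norm_mul, norm_pow, norm_inv, hnorm θ]
  have hboundsum : Summable (fun n => ‖A‖ ^ n * (r⁻¹ ^ (n + 1) * r ^ (m + 1))) := by
    have h1 : Summable (fun n : ℕ => (‖A‖ * r⁻¹) ^ n) := by
      apply summable_geometric_of_lt_one (by positivity)
      rw [← div_eq_mul_inv]
      exact (div_lt_one hr0).2 hr
    apply (h1.mul_right (r⁻¹ * r ^ (m + 1))).congr
    intro n
    rw [mul_pow, pow_succ']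
    ring
  -- swap sum and integral
  have hswap : HasSum (fun n => ∫ θ in (0:ℝ)..(2 * π), F n θ)
      (∫ θ in (0:ℝ)..(2 * π), SL (s θ) ∘L ((s θ ^ (m + 1)) • (1 : Y →L[ℝ] Y))) := by
    apply intervalIntegral.hasSum_integral_of_dominated_convergence
      (fun n _ => ‖A‖ ^ n * (r⁻¹ ^ (n + 1) * r ^ (m + 1)))
      (fun n => (hFcont n).aestronglyMeasurable)
    · exact fun n => Filter.Eventually.of_forall fun θ _ => hFbound n θ
    · exact Filter.Eventually.of_forall fun θ _ => hboundsum
    · exact intervalIntegrable_const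
    · apply Filter.Eventually.of_forall
      intro θ _
      rw [hint θ]
      exact (summable_fT_mul_rho (hzθ θ) ((s θ) ^ (m + 1))).hasSum
  -- compute each integral
  have hgval : ∀ n θ, g n θ = (r : ℂ) ^ ((m : ℤ) - n) *
      Complex.exp ((((m : ℤ) - n : ℤ) : ℂ) * Complex.I * θ) := by
    intro n θ
    have hx : s θ ≠ 0 := hsne θ
    have h2 : g n θ = (s θ) ^ ((m : ℤ) - n) := by
      rw [hg]
      show (s θ)⁻¹ ^ (n + 1) * s θ ^ (m + 1) = _
      rw [inv_pow, ← zpow_natCast (s θ) (n + 1), ← zpow_natCast (s θ) (m + 1), ← zpow_neg,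
        ← zpow_add₀ hx]
      congr 1
      push_cast
      ring
    rw [h2, hs θ, mul_zpow]
    congr 1
    rw [← Complex.exp_int_mul]
    congr 1
    push_cast
    ring
  have hgm : (∫ θ in (0:ℝ)..(2 * π), g m θ) = ((2 * π : ℝ) : ℂ) := by
    have h1 : ∀ θ : ℝ, g m θ = 1 := by
      intro θ
      rw [hgval m θ, sub_self, zpow_zero, one_mul]
      rw [Int.cast_zero]
      norm_num [Complex.exp_zero]
    simp only [h1]
    rw [intervalIntegral.integral_const]
    push_cast
    ring_nf
    simp [Complex.real_smul]
  have hg0 : ∀ n, n ≠ m → (∫ θ in (0:ℝ)..(2 * π), g n θ) = 0 := by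
    intro n hnm
    simp only [hgval]
    rw [intervalIntegral.integral_const_mul]
    have hk : ((((m : ℤ) - n : ℤ) : ℂ) * Complex.I) ≠ 0 := by
      apply mul_ne_zero _ Complex.I_ne_zero
      simp only [ne_eq, Int.cast_eq_zero, sub_eq_zero]
      exact_mod_cast fun h => hnm (by exact_mod_cast h.symm)
    rw [integral_exp_mul_complex hk]
    rw [show ((((m : ℤ) - n : ℤ) : ℂ) * Complex.I * ((2 * π : ℝ) : ℂ))
        = (((m : ℤ) - n : ℤ) : ℂ) * (2 * (π : ℂ) * Complex.I) by push_cast; ring,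
      Complex.exp_int_mul_two_pi_mul_I]
    simp
  have hintF : ∀ n, (∫ θ in (0:ℝ)..(2 * π), F n θ)
      = if n = m then (2 * π : ℝ) • A ^ m else 0 := by
    intro n
    have h1 : (∫ θ in (0:ℝ)..(2 * π), F n θ) = L n (∫ θ in (0:ℝ)..(2 * π), g n θ) := by
      rw [← (L n).intervalIntegral_comp_comm ((hgcont n).intervalIntegrable _ _)]
      rfl
    by_cases hnm : n = m
    · subst hnm
      rw [h1, hgm, if_pos rfl, hLapp, mul_rho_real]
    · rw [h1, hg0 n hnm, if_neg hnm, map_zero]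
  have hfinal : (∫ θ in (0:ℝ)..(2 * π), SL (s θ) ∘L ((s θ ^ (m + 1)) • (1 : Y →L[ℝ] Y)))
      = (2 * π : ℝ) • A ^ m := by
    have h2 : HasSum (fun n => if n = m then (2 * π : ℝ) • A ^ m else 0)
        ((2 * π : ℝ) • A ^ m) := hasSum_ite_eq m _
    have h3 := hswap
    rw [funext hintF] at h3
    exact h3.unique h2
  rw [hfinal, smul_smul, one_div, inv_mul_cancel₀ (by positivity : (2 * π : ℝ) ≠ 0), one_smul]
end

section
/- (S-spectral radius formula) Let Y be a nonzero complex Banach space and A a bounded ℝ-linear operator on Y. Let r_S(A) = sup{|s| : s ∈ σ_S(A)} be the S-spectral radius of A, where σ_S(A) = {s ∈ ℂ : A² − 2Re(s)A + |s|²I is not invertible}. Then the sequence ‖Aᵐ‖^{1/m} converges as m → ∞ and lim_{m→∞} ‖Aᵐ‖^{1/m} = r_S(A). -/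
noncomputable section
open Complex
open scoped ENNReal NNReal

variable {Y : Type*} [NormedAddCommGroup Y] [NormedSpace ℂ Y]

/-- `Zc Y = Y ⊕ Ȳ`, the complexification of the realification of `Y`. -/
def Zc (Y : Type*) : Type _ := Y × Y

namespace Zc

instance : NormedAddCommGroup (Zc Y) := inferInstanceAs (NormedAddCommGroup (Y × Y))
instance [CompleteSpace Y] : CompleteSpace (Zc Y) := inferInstanceAs (CompleteSpace (Y × Y))
instance [Nontrivial Y] : Nontrivial (Zc Y) := inferInstanceAs (Nontrivial (Y × Y))

instance : SMul ℂ (Zc Y) := ⟨fun s p => ((s • p.1 : Y), ((starRingEnd ℂ) s • p.2 : Y))⟩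

lemma smul_def (s : ℂ) (p : Zc Y) :
    s • p = ((s • p.1 : Y), ((starRingEnd ℂ) s • p.2 : Y)) := rfl

@[simp] lemma add_def (p q : Zc Y) : p + q = ((p.1 + q.1 : Y), (p.2 + q.2 : Y)) := rfl
@[simp] lemma sub_def (p q : Zc Y) : p - q = ((p.1 - q.1 : Y), (p.2 - q.2 : Y)) := rfl
@[simp] lemma zero_def : (0 : Zc Y) = ((0 : Y), (0 : Y)) := rfl

@[ext] lemma ext {p q : Zc Y} (h1 : p.1 = q.1) (h2 : p.2 = q.2) : p = q :=
  Prod.ext h1 h2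

instance : Module ℂ (Zc Y) where
  one_smul p := by ext <;> simp [smul_def]
  mul_smul s t p := Zc.ext (mul_smul s t p.1) (by
    show (starRingEnd ℂ) (s * t) • p.2 = (starRingEnd ℂ) s • (starRingEnd ℂ) t • p.2
    rw [map_mul, mul_smul])
  smul_zero s := Zc.ext (smul_zero s) (smul_zero _)
  smul_add s p q := Zc.ext (smul_add s p.1 q.1) (smul_add _ p.2 q.2)
  add_smul s t p := Zc.ext (add_smul s t p.1) (by
    show (starRingEnd ℂ) (s + t) • p.2 = (starRingEnd ℂ) s • p.2 + (starRingEnd ℂ) t • p.2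
    rw [map_add, add_smul])
  zero_smul p := by ext <;> simp [smul_def]

instance : NormedSpace ℂ (Zc Y) where
  norm_smul_le s p := by
    have h : ‖s • p‖ = max ‖s • p.1‖ ‖(starRingEnd ℂ) s • p.2‖ := rfl
    have hp : ‖p‖ = max ‖p.1‖ ‖p.2‖ := rfl
    rw [h, hp, norm_smul, norm_smul, RingHomIsometric.norm_map (σ := starRingEnd ℂ)] <;>
      try rw [mul_max_of_nonneg _ _ (norm_nonneg s)]

end Zc

section Pi

set_option linter.unusedSectionVars false

variable (A B : Y →L[ℝ] Y)

/-- First component of the complexified operator. -/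
def fA (A : Y →L[ℝ] Y) (x y : Y) : Y :=
  (2⁻¹ : ℝ) • (A (x + y) - Complex.I • A (Complex.I • (x - y)))

lemma I_smul_I (w : Y) : Complex.I • Complex.I • w = -w := by
  rw [smul_smul, Complex.I_mul_I, neg_one_smul]

lemma I_smul_real (r : ℝ) (w : Y) :
    Complex.I • r • w = r • (Complex.I • w) := (smul_comm _ _ _)

lemma smul_re_im (s : ℂ) (w : Y) :
    s • w = s.re • w + s.im • (Complex.I • w) := by
  have h : s • w = ((s.re : ℂ) + (s.im : ℂ) * Complex.I) • w := by rw [Complex.re_add_im]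
  rw [h, add_smul, mul_smul, Complex.coe_smul, Complex.coe_smul]

lemma fA_add (x x' y y' : Y) :
    fA A (x + x') (y + y') = fA A x y + fA A x' y' := by
  simp only [fA, smul_add, smul_sub, map_add, map_sub, I_smul_I, I_smul_real, smul_neg]
  abel

lemma fA_csmul (s : ℂ) (x y : Y) :
    fA A (s • x) ((starRingEnd ℂ) s • y) = s • fA A x y := by
  simp only [fA, smul_re_im s, smul_re_im ((starRingEnd ℂ) s), Complex.conj_re,
    Complex.conj_im, neg_smul, smul_add, smul_sub, smul_neg, map_add, map_sub, map_neg,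
    A.map_smul, I_smul_real, I_smul_I]
  module

lemma norm_fA_le (x y : Y) : ‖fA A x y‖ ≤ 2 * ‖A‖ * max ‖x‖ ‖y‖ := by
  have h1 : ‖fA A x y‖ ≤ (2⁻¹ : ℝ) * (‖A (x + y)‖ + ‖Complex.I • A (Complex.I • (x - y))‖) := by
    rw [fA, norm_smul]
    simp only [norm_inv, Real.norm_ofNat]
    gcongr
    all_goals first | exact norm_sub_le _ _ | norm_num
  have h2 : ‖Complex.I • A (Complex.I • (x - y))‖ = ‖A (Complex.I • (x - y))‖ := by
    rw [norm_smul, Complex.norm_I, one_mul]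
  have h3 : ‖A (x + y)‖ ≤ ‖A‖ * (‖x‖ + ‖y‖) :=
    (A.le_opNorm _).trans (by gcongr; exact norm_add_le _ _)
  have h4 : ‖A (Complex.I • (x - y))‖ ≤ ‖A‖ * (‖x‖ + ‖y‖) := by
    refine (A.le_opNorm _).trans ?_
    rw [norm_smul, Complex.norm_I, one_mul]
    gcongr
    exact norm_sub_le _ _
  have h5 : ‖x‖ + ‖y‖ ≤ 2 * max ‖x‖ ‖y‖ := by
    have := le_max_left ‖x‖ ‖y‖
    have := le_max_right ‖x‖ ‖y‖
    linarith
  calc ‖fA A x y‖ ≤ (2⁻¹ : ℝ) * (‖A‖ * (‖x‖ + ‖y‖) + ‖A‖ * (‖x‖ + ‖y‖)) := by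
        rw [h2] at h1; exact h1.trans (by gcongr)
    _ = ‖A‖ * (‖x‖ + ‖y‖) := by ring
    _ ≤ ‖A‖ * (2 * max ‖x‖ ‖y‖) := by
        gcongr
        all_goals first | exact norm_nonneg A | exact h5
    _ = 2 * ‖A‖ * max ‖x‖ ‖y‖ := by ring

/-- The complexification `π A` of `A` as a `ℂ`-linear continuous map on `Zc Y`. -/
def Pi (A : Y →L[ℝ] Y) : Zc Y →L[ℂ] Zc Y :=
  LinearMap.mkContinuous
    { toFun := fun p => ((fA A p.1 p.2 : Y), (fA A p.2 p.1 : Y))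
      map_add' := fun p q => by
        ext
        · exact fA_add A p.1 q.1 p.2 q.2
        · exact fA_add A p.2 q.2 p.1 q.1
      map_smul' := fun s p => by
        ext
        · exact fA_csmul A s p.1 p.2
        · show fA A ((starRingEnd ℂ) s • p.2) (s • p.1) = (starRingEnd ℂ) s • fA A p.2 p.1
          have := fA_csmul A ((starRingEnd ℂ) s) p.2 p.1
          rwa [Complex.conj_conj] at this }
    (2 * ‖A‖)
    (fun p => by
      have h : ‖((fA A p.1 p.2 : Y), (fA A p.2 p.1 : Y))‖
          = max ‖fA A p.1 p.2‖ ‖fA A p.2 p.1‖ := rfl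
      have hp : ‖p‖ = max ‖p.1‖ ‖p.2‖ := rfl
      show max ‖fA A p.1 p.2‖ ‖fA A p.2 p.1‖ ≤ 2 * ‖A‖ * ‖p‖
      rw [hp]
      refine max_le (norm_fA_le A _ _) ((norm_fA_le A _ _).trans_eq ?_)
      rw [max_comm])

@[simp] lemma Pi_apply (p : Zc Y) :
    Pi A p = ((fA A p.1 p.2 : Y), (fA A p.2 p.1 : Y)) := rfl

lemma fA_self (u : Y) : fA A u u = A u := by
  simp only [fA, sub_self, smul_zero, map_zero, sub_zero, map_add]
  rw [smul_add]
  module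

lemma fA_one (x y : Y) : fA 1 x y = x := by
  simp only [fA, ContinuousLinearMap.one_apply, I_smul_I]
  module

lemma fA_sum (x y : Y) : fA B x y + fA B y x = B (x + y) := by
  simp only [fA, smul_sub, smul_add, map_add, map_sub, I_smul_I, I_smul_real, smul_neg]
  module

lemma fA_diff (x y : Y) :
    fA B x y - fA B y x = -(Complex.I • B (Complex.I • (x - y))) := by
  simp only [fA, smul_sub, smul_add, map_add, map_sub, I_smul_I, I_smul_real, smul_neg]
  module

lemma fA_comp (x y : Y) :
    fA A (fA B x y) (fA B y x) = fA (A * B) x y := by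
  have hdef : fA A (fA B x y) (fA B y x) = (2⁻¹ : ℝ) • (A (fA B x y + fA B y x)
      - Complex.I • A (Complex.I • (fA B x y - fA B y x))) := rfl
  rw [hdef, fA_sum, fA_diff]
  have : Complex.I • -(Complex.I • B (Complex.I • (x - y))) = B (Complex.I • (x - y)) := by
    rw [smul_neg, I_smul_I, neg_neg]
  rw [this]
  rfl

lemma Pi_one : Pi (1 : Y →L[ℝ] Y) = 1 := by
  ext p <;> simp [fA_one]

lemma Pi_mul : Pi (A * B) = Pi A * Pi B := by
  ext p
  · show fA (A * B) p.1 p.2 = fA A (fA B p.1 p.2) (fA B p.2 p.1)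
    exact (fA_comp A B p.1 p.2).symm
  · show fA (A * B) p.2 p.1 = fA A (fA B p.2 p.1) (fA B p.1 p.2)
    exact (fA_comp A B p.2 p.1).symm

lemma Pi_add : Pi (A + B) = Pi A + Pi B := by
  ext p <;> simp [fA, smul_add, add_sub_add_comm] <;> rfl

lemma fA_smul (r : ℝ) (x y : Y) : fA (r • A) x y = r • fA A x y := by
  simp only [fA, ContinuousLinearMap.smul_apply, I_smul_real]
  rw [← smul_sub, smul_comm]

lemma Pi_smul (r : ℝ) : Pi (r • A) = (r : ℂ) • Pi A := by
  ext p
  · show fA (r • A) p.1 p.2 = ((r : ℂ) • Pi A p).1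
    rw [Zc.smul_def]
    show fA (r • A) p.1 p.2 = (r : ℂ) • fA A p.1 p.2
    rw [Complex.coe_smul, fA_smul]
  · show fA (r • A) p.2 p.1 = ((r : ℂ) • Pi A p).2
    rw [Zc.smul_def]
    show fA (r • A) p.2 p.1 = (starRingEnd ℂ) (r : ℂ) • fA A p.2 p.1
    rw [Complex.conj_ofReal, Complex.coe_smul, fA_smul]

lemma Pi_pow (m : ℕ) : Pi (A ^ m) = Pi A ^ m := by
  induction m with
  | zero => simpa using Pi_one
  | succ n ih => rw [pow_succ, pow_succ, Pi_mul, ih]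

lemma norm_Pi_le : ‖Pi A‖ ≤ 2 * ‖A‖ :=
  LinearMap.mkContinuous_norm_le _ (by positivity) _

lemma norm_le_norm_Pi : ‖A‖ ≤ ‖Pi A‖ := by
  refine A.opNorm_le_bound (norm_nonneg _) (fun u => ?_)
  have h1 : A u = (Pi A ((u, u) : Zc Y)).1 := by
    exact (fA_self A u).symm
  have h2 : ‖(Pi A ((u, u) : Zc Y)).1‖ ≤ ‖Pi A ((u, u) : Zc Y)‖ := by
    exact le_max_left _ _
  have h3 : ‖((u, u) : Zc Y)‖ = ‖u‖ := by
    show max ‖u‖ ‖u‖ = ‖u‖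
    exact max_self _
  calc ‖A u‖ ≤ ‖Pi A ((u, u) : Zc Y)‖ := by rw [h1]; exact h2
    _ ≤ ‖Pi A‖ * ‖((u, u) : Zc Y)‖ := (Pi A).le_opNorm _
    _ = ‖Pi A‖ * ‖u‖ := by rw [h3]

section Bij

/-- Function-level "real coordinates" map. -/
def Phi (p : Y × Y) : Zc Y := ((p.1 + Complex.I • p.2 : Y), (p.1 - Complex.I • p.2 : Y))

def Psi (p : Zc Y) : Y × Y :=
  ((2⁻¹ : ℝ) • (p.1 + p.2), (-2⁻¹ : ℝ) • (Complex.I • (p.1 - p.2)))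

lemma Phi_Psi (p : Zc Y) : Phi (Psi p) = p := by
  unfold Phi Psi
  ext
  · show (2⁻¹ : ℝ) • (p.1 + p.2) + Complex.I • ((-2⁻¹ : ℝ) • (Complex.I • (p.1 - p.2))) = p.1
    rw [I_smul_real, I_smul_I]
    module
  · show (2⁻¹ : ℝ) • (p.1 + p.2) - Complex.I • ((-2⁻¹ : ℝ) • (Complex.I • (p.1 - p.2))) = p.2
    rw [I_smul_real, I_smul_I]
    module

lemma Psi_Phi (p : Y × Y) : Psi (Phi p) = p := by
  unfold Phi Psi
  ext
  · show (2⁻¹ : ℝ) • ((p.1 + Complex.I • p.2) + (p.1 - Complex.I • p.2)) = p.1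
    module
  · show (-2⁻¹ : ℝ) • (Complex.I • ((p.1 + Complex.I • p.2) - (p.1 - Complex.I • p.2))) = p.2
    rw [show (p.1 + Complex.I • p.2) - (p.1 - Complex.I • p.2) = (2:ℝ) • (Complex.I • p.2) by module,
      I_smul_real, I_smul_I]
    module

lemma Pi_decomp (A : Y →L[ℝ] Y) (p : Zc Y) :
    Pi A p = Phi (Prod.map A A (Psi p)) := by
  unfold Phi Psi
  ext
  · show fA A p.1 p.2 = A ((2⁻¹:ℝ) • (p.1 + p.2)) + Complex.I • A ((-2⁻¹:ℝ) • (Complex.I • (p.1 - p.2)))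
    rw [map_smul, map_smul, I_smul_real]
    show fA A p.1 p.2 = 2⁻¹ • A (p.1 + p.2) + (-2⁻¹ : ℝ) • (Complex.I • A (Complex.I • (p.1 - p.2)))
    rw [fA]
    module
  · show fA A p.2 p.1 = A ((2⁻¹:ℝ) • (p.1 + p.2)) - Complex.I • A ((-2⁻¹:ℝ) • (Complex.I • (p.1 - p.2)))
    rw [map_smul, map_smul, I_smul_real]
    show fA A p.2 p.1 = 2⁻¹ • A (p.1 + p.2) - (-2⁻¹ : ℝ) • (Complex.I • A (Complex.I • (p.1 - p.2)))
    rw [fA, show p.2 + p.1 = p.1 + p.2 by abel, show p.2 - p.1 = -(p.1 - p.2) by abel]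
    rw [smul_neg, map_neg, smul_neg]
    module

lemma phi_bij : Function.Bijective (Phi (Y := Y)) :=
  Function.bijective_iff_has_inverse.mpr ⟨Psi, Psi_Phi, Phi_Psi⟩

lemma psi_bij : Function.Bijective (Psi (Y := Y)) :=
  Function.bijective_iff_has_inverse.mpr ⟨Phi, Phi_Psi, Psi_Phi⟩

lemma Pi_bij_iff (A : Y →L[ℝ] Y) :
    Function.Bijective (Pi A) ↔ Function.Bijective A := by
  have hfun : ⇑(Pi A) = Phi ∘ Prod.map A A ∘ Psi := by
    funext p; exact Pi_decomp A p
  constructor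
  · intro h
    have hmap : Function.Bijective (Prod.map (⇑A) (⇑A)) := by
      have : Prod.map (⇑A) (⇑A) = Psi ∘ ⇑(Pi A) ∘ Phi := by
        funext p
        show Prod.map (⇑A) (⇑A) p = Psi (Pi A (Phi p))
        rw [Pi_decomp, Psi_Phi, Psi_Phi]
      rw [this]
      exact psi_bij.comp (h.comp phi_bij)
    exact (Prod.map_bijective.mp hmap).1
  · intro h
    rw [hfun]
    exact phi_bij.comp ((h.prodMap h).comp psi_bij)

/-- swap as conjugation. -/
lemma swap_bij : Function.Bijective (fun p : Zc Y => ((p.2, p.1) : Zc Y)) :=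
  Function.bijective_iff_has_inverse.mpr
    ⟨fun p => ((p.2, p.1) : Zc Y), fun p => rfl, fun p => rfl⟩

end Bij

lemma Pi_sub (A B : Y →L[ℝ] Y) : Pi (A - B) = Pi A - Pi B := by
  have h := Pi_add (A - B) B
  rw [sub_add_cancel] at h
  rw [h]; abel

section Spectrum

variable [CompleteSpace Y] (A : Y →L[ℝ] Y) (s : ℂ)

local notation "E" => Zc Y →L[ℂ] Zc Y

/-- The quadratic pencil. -/
noncomputable def Qs (A : Y →L[ℝ] Y) (s : ℂ) : Y →L[ℝ] Y :=
  A ^ 2 - (2 * s.re) • A + (‖s‖ ^ 2) • (1 : Y →L[ℝ] Y)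

lemma key_factor :
    (algebraMap ℂ E s - Pi A) * (algebraMap ℂ E ((starRingEnd ℂ) s) - Pi A)
      = Pi (Qs A s) := by
  rw [Qs, Pi_add, Pi_sub, Pi_smul, Pi_smul, Pi_pow, Pi_one]
  rw [mul_sub, sub_mul, sub_mul]
  rw [← map_mul, Complex.mul_conj]
  rw [show (algebraMap ℂ E s) * Pi A = s • Pi A from (Algebra.smul_def s (Pi A)).symm]
  rw [show Pi A * (algebraMap ℂ E ((starRingEnd ℂ) s)) = (starRingEnd ℂ) s • Pi A from
    by rw [← Algebra.commutes]; exact (Algebra.smul_def _ (Pi A)).symm]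
  rw [show (algebraMap ℂ E ((Complex.normSq s : ℝ) : ℂ)) = ((Complex.normSq s : ℝ) : ℂ) • (1 : E)
    from Algebra.algebraMap_eq_smul_one _]
  rw [pow_two]
  have habs : ((‖s‖ ^ 2 : ℝ) : ℂ) = ((Complex.normSq s : ℝ) : ℂ) := by
    norm_cast; exact Complex.sq_norm s
  have hre : ((2 * s.re : ℝ) : ℂ) = s + (starRingEnd ℂ) s := (Complex.add_conj s).symm
  rw [habs, hre, add_smul]
  module

lemma key_commute :
    Commute (algebraMap ℂ E s - Pi A) (algebraMap ℂ E ((starRingEnd ℂ) s) - Pi A) := by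
  have h1 : Commute (algebraMap ℂ E s) (algebraMap ℂ E ((starRingEnd ℂ) s)) :=
    Algebra.commute_algebraMap_left _ _
  have h2 : Commute (algebraMap ℂ E s) (Pi A) := Algebra.commute_algebraMap_left _ _
  have h3 : Commute (Pi A) (algebraMap ℂ E ((starRingEnd ℂ) s)) :=
    (Algebra.commute_algebraMap_left _ _).symm
  have hL : Commute (algebraMap ℂ E s) (algebraMap ℂ E ((starRingEnd ℂ) s) - Pi A) :=
    h1.sub_right h2
  have hR : Commute (Pi A) (algebraMap ℂ E ((starRingEnd ℂ) s) - Pi A) :=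
    h3.sub_right (Commute.refl _)
  exact hL.sub_left hR

lemma isUnit_Pi_iff (B : Y →L[ℝ] Y) : IsUnit (Pi B) ↔ IsUnit B := by
  rw [ContinuousLinearMap.isUnit_iff_bijective, ContinuousLinearMap.isUnit_iff_bijective]
  exact Pi_bij_iff B

lemma conj_resolvent (h : IsUnit (algebraMap ℂ E s - Pi A)) :
    IsUnit (algebraMap ℂ E ((starRingEnd ℂ) s) - Pi A) := by
  rw [ContinuousLinearMap.isUnit_iff_bijective] at h ⊢
  have hfun : ⇑(algebraMap ℂ E ((starRingEnd ℂ) s) - Pi A)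
      = (fun p : Zc Y => ((p.2, p.1) : Zc Y)) ∘ ⇑(algebraMap ℂ E s - Pi A)
        ∘ (fun p : Zc Y => ((p.2, p.1) : Zc Y)) := by
    funext p
    ext
    · show ((starRingEnd ℂ) s • p.1 : Y) - fA A p.1 p.2 = ((starRingEnd ℂ) s • p.1 : Y) - fA A p.1 p.2
      rfl
    · show (((starRingEnd ℂ) ((starRingEnd ℂ) s)) • p.2 : Y) - fA A p.2 p.1
        = (s • p.2 : Y) - fA A p.2 p.1
      rw [Complex.conj_conj]
  rw [hfun]
  exact swap_bij.comp (h.comp swap_bij)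

lemma mem_spectrum_Pi_iff :
    s ∈ spectrum ℂ (Pi A) ↔ ¬ IsUnit (Qs A s) := by
  rw [spectrum.mem_iff, not_iff_not]
  constructor
  · intro h
    have hv := conj_resolvent A s h
    have huv := h.mul hv
    rw [key_factor] at huv
    exact (isUnit_Pi_iff _).mp huv
  · intro h
    have huv : IsUnit ((algebraMap ℂ E s - Pi A)
        * (algebraMap ℂ E ((starRingEnd ℂ) s) - Pi A)) := by
      rw [key_factor]; exact (isUnit_Pi_iff _).mpr h
    exact ((key_commute A s).isUnit_mul_iff.mp huv).1

end Spectrum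

end Pi

section Final

variable [CompleteSpace Y] [Nontrivial Y] (A : Y →L[ℝ] Y)

lemma spectrum_Pi_eq : spectrum ℂ (Pi A) = {s : ℂ | ¬ IsUnit (Qs A s)} :=
  Set.ext fun s => mem_spectrum_Pi_iff A s

theorem stmt_17' :
    Filter.Tendsto (fun m : ℕ => ‖A ^ m‖ ^ (1 / (m : ℝ))) Filter.atTop
      (nhds (sSup ((fun s : ℂ => ‖s‖) '' {s : ℂ | ¬ IsUnit (Qs A s)}))) := by
  classical
  set T : Zc Y →L[ℂ] Zc Y := Pi A with hT
  haveI : Nontrivial (Zc Y →L[ℂ] Zc Y) := ⟨1, 0, fun h => by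
    obtain ⟨z, hz⟩ := exists_ne (0 : Zc Y)
    exact hz (by simpa using DFunLike.congr_fun h z)⟩
  have hne : spectralRadius ℂ T ≠ ⊤ :=
    ((spectrum.spectralRadius_le_nnnorm (𝕜 := ℂ) T).trans_lt ENNReal.coe_lt_top).ne
  set rr : ℝ := (spectralRadius ℂ T).toReal with hrr
  -- the sSup equals rr
  have hsup : sSup ((fun s : ℂ => ‖s‖) '' {s : ℂ | ¬ IsUnit (Qs A s)}) = rr := by
    rw [← spectrum_Pi_eq]
    refine IsGreatest.csSup_eq ⟨?_, ?_⟩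
    · obtain ⟨z, hz, hz2⟩ := spectrum.exists_nnnorm_eq_spectralRadius T
      refine ⟨z, hz, ?_⟩
      have : ((‖z‖₊ : ℝ≥0∞)).toReal = rr := by rw [hz2]
      simpa using this
    · rintro x ⟨z, hz, rfl⟩
      have hle : (‖z‖₊ : ℝ≥0∞) ≤ spectralRadius ℂ T :=
        le_iSup₂ (f := fun k (_ : k ∈ spectrum ℂ T) => (‖k‖₊ : ℝ≥0∞)) z hz
      have := ENNReal.toReal_mono hne hle
      simpa using this
  rw [hsup]
  -- Gelfand for T
  have h₁ := spectrum.pow_nnnorm_pow_one_div_tendsto_nhds_spectralRadius T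
  have hTlim : Filter.Tendsto (fun n : ℕ => ‖T ^ n‖ ^ (1 / (n : ℝ))) Filter.atTop (nhds rr) := by
    have h₂ := (ENNReal.tendsto_toReal hne).comp h₁
    refine h₂.congr (fun n => ?_)
    show (((‖T ^ n‖₊ : ℝ≥0∞)) ^ (1 / (n : ℝ))).toReal = ‖T ^ n‖ ^ (1 / (n : ℝ))
    rw [← ENNReal.toReal_rpow, ENNReal.coe_toReal, coe_nnnorm]
  -- squeeze
  have hle1 : ∀ m : ℕ, ‖A ^ m‖ ≤ ‖T ^ m‖ := fun m => by
    rw [hT, ← Pi_pow]; exact norm_le_norm_Pi _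
  have hle2 : ∀ m : ℕ, ‖T ^ m‖ ≤ 2 * ‖A ^ m‖ := fun m => by
    rw [hT, ← Pi_pow]; exact norm_Pi_le _
  have hup : ∀ m : ℕ, ‖A ^ m‖ ^ (1 / (m : ℝ)) ≤ ‖T ^ m‖ ^ (1 / (m : ℝ)) := fun m =>
    Real.rpow_le_rpow (norm_nonneg _) (hle1 m) (by positivity)
  have hlow : ∀ m : ℕ, ‖T ^ m‖ ^ (1 / (m : ℝ)) / (2 : ℝ) ^ (1 / (m : ℝ))
      ≤ ‖A ^ m‖ ^ (1 / (m : ℝ)) := fun m => by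
    rw [div_le_iff₀ (Real.rpow_pos_of_pos two_pos _)]
    calc ‖T ^ m‖ ^ (1 / (m : ℝ)) ≤ (2 * ‖A ^ m‖) ^ (1 / (m : ℝ)) :=
          Real.rpow_le_rpow (norm_nonneg _) (hle2 m) (by positivity)
      _ = (2 : ℝ) ^ (1 / (m : ℝ)) * ‖A ^ m‖ ^ (1 / (m : ℝ)) :=
          Real.mul_rpow (by norm_num) (norm_nonneg _)
      _ = ‖A ^ m‖ ^ (1 / (m : ℝ)) * (2 : ℝ) ^ (1 / (m : ℝ)) := mul_comm _ _
  have htwo : Filter.Tendsto (fun m : ℕ => (2 : ℝ) ^ (1 / (m : ℝ))) Filter.atTop (nhds 1) := by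
    have h0 : Filter.Tendsto (fun m : ℕ => 1 / (m : ℝ)) Filter.atTop (nhds 0) :=
      tendsto_one_div_atTop_nhds_zero_nat
    have hc : ContinuousAt (fun x : ℝ => (2 : ℝ) ^ x) 0 :=
      Real.continuousAt_const_rpow (by norm_num)
    have := hc.tendsto.comp h0
    simpa [Real.rpow_zero, Function.comp_def] using this
  have hlowlim : Filter.Tendsto
      (fun m : ℕ => ‖T ^ m‖ ^ (1 / (m : ℝ)) / (2 : ℝ) ^ (1 / (m : ℝ)))
      Filter.atTop (nhds rr) := by
    have := hTlim.div htwo one_ne_zero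
    rw [div_one] at this; exact this
  exact tendsto_of_tendsto_of_tendsto_of_le_of_le hlowlim hTlim hlow hup

end Final

end

/-- S-spectral radius formula: `‖Aᵐ‖^{1/m} → r_S(A)` where
`r_S(A) = sup{|s| : s ∈ σ_S(A)}`. -/
theorem stmt_17 {Y : Type*} [NormedAddCommGroup Y] [NormedSpace ℂ Y] [CompleteSpace Y]
    [Nontrivial Y] (A : Y →L[ℝ] Y) :
    Filter.Tendsto (fun m : ℕ => ‖A ^ m‖ ^ (1 / (m : ℝ))) Filter.atTop
      (nhds (sSup ((fun s : ℂ => ‖s‖) ''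
        {s : ℂ | ¬ IsUnit (A ^ 2 - (2 * s.re) • A
          + (‖s‖ ^ 2) • (1 : Y →L[ℝ] Y))}))) := by
  exact stmt_17' A
end
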